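/- arXiv:2004.14137 — 5 statements merged into one kernel-verified Lean document; each statement's English description precedes it below -/
import Mathlib

section
/- Let (K_m)_{m≥1} and (e_m)_{m≥1} be sequences of strictly positive reals such that K_m/(A m^{-α}) → 1 and e_m/(B m^{-β}) → 1 as m → ∞, where A, B ∈ (0,∞) and α, β ∈ ℝ satisfy α ≤ 1 < α + β (so that β > 0 and χ := Σ_{m≥1} K_m e_m < ∞). Set γ = (α+β−1)/β ∈ (0,1]. Then lim_{t→∞} t^γ · Σ_{m≥1} K_m e_m e^{−e_m t} = (A/β) B^{1−γ} Γ(γ), where Γ is Euler's Gamma function. Equivalently, the wake-up time τ with survival function P(τ > t) = χ^{−1} Σ_{m≥1} K_m e_m e^{−e_m t} satisfies P(τ > t) ∼ C t^{−γ} as t → ∞, with C = A B^{1−γ} Γ(γ)/(χ β). -/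
/-!
Write `p = α + β` and `profile p β s x = x^{-p} e^{-s x^{-β}}`. For `x ∈ (m - 1, m]` with `m`
large, `K_m` and `e_m` are within factors `1 ± ε` of `A x^{-α}` and `B x^{-β}`, so the summand
`K_m e_m e^{-e_m t}` lies between `(1 ∓ ε)² A B · profile p β ((1 ± ε) B t) x`; integrating over
`(m - 1, m]` and summing, the tail of the series is squeezed between integrals of the profile
over `(N, ∞)`. The scaling `x ↦ (c t)^{1/β} x` turns `t^γ ∫_N^∞ profile p β (c t)` into
`c^{-γ} ∫ profile p β 1` over `(N (c t)^{-1/β}, ∞)`, which tends to `c^{-γ} Γ(γ) / β` because the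
substitution `y = x^{-β}` turns `∫_0^∞ profile p β 1` into Euler's integral. The finitely many
remaining summands are `O(t^γ e^{-e_m t}) → 0`, and letting `ε → 0` gives `A B · B^{-γ} Γ(γ) / β`.
-/

open Filter MeasureTheory Real Set Topology

namespace SeedBank

theorem tendsto_of_eventually_sandwich {α ι : Type*} {l : Filter α} {p : Filter ι} [p.NeBot]
    {f : α → ℝ} {lo hi : ι → ℝ} {L : ℝ} (hlo : Tendsto lo p (𝓝 L)) (hhi : Tendsto hi p (𝓝 L))
    (h : ∀ᶠ i in p, ∃ u v : α → ℝ, Tendsto u l (𝓝 (lo i)) ∧ Tendsto v l (𝓝 (hi i)) ∧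
      ∀ᶠ x in l, u x ≤ f x ∧ f x ≤ v x) :
    Tendsto f l (𝓝 L) := by
  rw [tendsto_order]
  refine ⟨fun a ha => ?_, fun b hb => ?_⟩
  · obtain ⟨i, hai, u, _, hu, _, hf⟩ := ((hlo.eventually (lt_mem_nhds ha)).and h).exists
    filter_upwards [hu.eventually (lt_mem_nhds hai), hf] with x hux hfx
    exact hux.trans_le hfx.1
  · obtain ⟨i, hib, _, v, _, hv, hf⟩ := ((hhi.eventually (gt_mem_nhds hb)).and h).exists
    filter_upwards [hv.eventually (gt_mem_nhds hib), hf] with x hvx hfx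
    exact hfx.2.trans_lt hvx

theorem eventually_bounds_of_tendsto_div {α : Type*} {l : Filter α} {f g : α → ℝ}
    (hfg : Tendsto (fun x => f x / g x) l (𝓝 1)) (hg : ∀ᶠ x in l, 0 < g x) {ε : ℝ} (hε : 0 < ε) :
    ∀ᶠ x in l, (1 - ε) * g x ≤ f x ∧ f x ≤ (1 + ε) * g x := by
  have hnhds : Ioo (1 - ε) (1 + ε) ∈ 𝓝 (1 : ℝ) := Ioo_mem_nhds (by linarith) (by linarith)
  filter_upwards [hfg.eventually hnhds, hg] with x ⟨hlo, hhi⟩ hgx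
  rw [lt_div_iff₀ hgx] at hlo
  rw [div_lt_iff₀ hgx] at hhi
  exact ⟨hlo.le, hhi.le⟩

theorem tendsto_comp_natCeil_div_rpow {u : ℕ → ℝ} {C a : ℝ}
    (hu : Tendsto (fun n : ℕ => u n / (C * (n : ℝ) ^ (-a))) atTop (𝓝 1)) :
    Tendsto (fun x : ℝ => u ⌈x⌉₊ / (C * x ^ (-a))) atTop (𝓝 1) := by
  have hratio : Tendsto (fun x : ℝ => ((⌈x⌉₊ : ℝ) / x) ^ (-a)) atTop (𝓝 1) := by
    have h := (continuousAt_rpow_const 1 (-a) (Or.inl one_ne_zero)).tendsto.comp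
      tendsto_nat_ceil_div_atTop
    rwa [one_rpow] at h
  refine ((hu.comp tendsto_nat_ceil_atTop).mul hratio).congr' ?_ |>.trans (by rw [mul_one])
  filter_upwards [eventually_gt_atTop 0] with x hx
  have hceil : 0 < (⌈x⌉₊ : ℝ) := Nat.cast_pos.2 (Nat.ceil_pos.2 hx)
  rw [Function.comp_apply, div_rpow hceil.le hx.le]
  have : (⌈x⌉₊ : ℝ) ^ (-a) ≠ 0 := (rpow_pos_of_pos hceil _).ne'
  field_simp

theorem iUnion_Ioc_add_natCast (r : ℝ) : ⋃ m : ℕ, Ioc (r + m) (r + m + 1) = Ioi r := by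
  ext x
  simp only [mem_iUnion, mem_Ioc, mem_Ioi]
  constructor
  · rintro ⟨m, hm, -⟩
    linarith [m.cast_nonneg (α := ℝ)]
  · intro hx
    have hn : ⌈x - r⌉₊ ≠ 0 := (Nat.ceil_pos.2 (sub_pos.2 hx)).ne'
    obtain ⟨hlt, hle⟩ := (Nat.ceil_eq_iff hn).1 rfl
    refine ⟨⌈x - r⌉₊ - 1, by linarith, ?_⟩
    rw [Nat.cast_sub (Nat.one_le_iff_ne_zero.2 hn), Nat.cast_one]
    linarith

theorem Ioc_add_natCast_subset_Ioi (r : ℝ) (m : ℕ) : Ioc (r + m) (r + m + 1) ⊆ Ioi r :=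
  iUnion_Ioc_add_natCast r ▸ subset_iUnion (fun m : ℕ => Ioc (r + m) (r + m + 1)) m

theorem hasSum_integral_Ioc_add_natCast {f : ℝ → ℝ} {r : ℝ} (hf : IntegrableOn f (Ioi r)) :
    HasSum (fun m : ℕ => ∫ x in Ioc (r + m) (r + m + 1), f x) (∫ x in Ioi r, f x) := by
  rw [← iUnion_Ioc_add_natCast r] at hf ⊢
  refine hasSum_integral_iUnion (fun _ => measurableSet_Ioc) ?_ hf
  refine (pairwise_disjoint_on _).2 fun m n hmn => Ioc_disjoint_Ioc_of_le ?_
  have : (m : ℝ) + 1 ≤ n := by exact_mod_cast hmn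
  linarith

theorem le_setIntegral_Ioc_add_one {f : ℝ → ℝ} {r c : ℝ} (hf : IntegrableOn f (Ioc r (r + 1)))
    (h : ∀ x ∈ Ioc r (r + 1), c ≤ f x) : c ≤ ∫ x in Ioc r (r + 1), f x := by
  simpa using setIntegral_ge_of_const_le_real measurableSet_Ioc measure_Ioc_lt_top.ne h hf

theorem setIntegral_Ioc_add_one_le {f : ℝ → ℝ} {r c : ℝ} (hf : IntegrableOn f (Ioc r (r + 1)))
    (h : ∀ x ∈ Ioc r (r + 1), f x ≤ c) : ∫ x in Ioc r (r + 1), f x ≤ c := by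
  simpa using
    setIntegral_mono_on hf (integrableOn_const measure_Ioc_lt_top.ne) measurableSet_Ioc h

theorem summable_and_tsum_le_integral_Ioi {a : ℕ → ℝ} {f : ℝ → ℝ} {r : ℝ}
    (hf : IntegrableOn f (Ioi r)) (ha : ∀ m, 0 ≤ a m)
    (h : ∀ m : ℕ, ∀ x ∈ Ioc (r + m) (r + m + 1), a m ≤ f x) :
    Summable a ∧ ∑' m, a m ≤ ∫ x in Ioi r, f x := by
  have hsum := hasSum_integral_Ioc_add_natCast hf
  have hle : ∀ m : ℕ, a m ≤ ∫ x in Ioc (r + m) (r + m + 1), f x := fun m =>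
    le_setIntegral_Ioc_add_one (hf.mono_set (Ioc_add_natCast_subset_Ioi r m)) (h m)
  have ha_sum : Summable a := hsum.summable.of_nonneg_of_le ha hle
  exact ⟨ha_sum, hasSum_le hle ha_sum.hasSum hsum⟩

theorem integral_Ioi_le_tsum {a : ℕ → ℝ} {f : ℝ → ℝ} {r : ℝ}
    (hf : IntegrableOn f (Ioi r)) (ha : Summable a)
    (h : ∀ m : ℕ, ∀ x ∈ Ioc (r + m) (r + m + 1), f x ≤ a m) :
    ∫ x in Ioi r, f x ≤ ∑' m, a m :=
  hasSum_le (fun m => setIntegral_Ioc_add_one_le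
    (hf.mono_set (Ioc_add_natCast_subset_Ioi r m)) (h m)) (hasSum_integral_Ioc_add_natCast hf)
    ha.hasSum

noncomputable def profile (p β s x : ℝ) : ℝ := x ^ (-p) * exp (-(s * x ^ (-β)))

theorem profile_nonneg (p β s : ℝ) {x : ℝ} (hx : 0 ≤ x) : 0 ≤ profile p β s x :=
  mul_nonneg (rpow_nonneg hx _) (exp_pos _).le

theorem profile_rpow_neg_eq {p β l x : ℝ} (hl : 0 < l) (hx : 0 < x) :
    profile p β (l ^ (-β)) x = l ^ p * profile p β 1 (l * x) := by
  simp only [profile, mul_rpow hl.le hx.le, one_mul, rpow_neg hl.le p]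
  field_simp [(rpow_pos_of_pos hl p).ne']

theorem integrableOn_profile_one_and_integral {p β : ℝ} (hp : 1 < p) (hβ : 0 < β) :
    IntegrableOn (profile p β 1) (Ioi 0) ∧
      ∫ x in Ioi 0, profile p β 1 x = Gamma ((p - 1) / β) / β := by
  set γ := (p - 1) / β
  have hγ : 0 < γ := div_pos (by linarith) hβ
  set g : ℝ → ℝ := fun y => β⁻¹ * (exp (-y) * y ^ (γ - 1))
  have hsubst : EqOn (fun x => (|-β| * x ^ (-β - 1)) • g (x ^ (-β))) (profile p β 1) (Ioi 0) := by
    intro x hx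
    have hx : 0 < x := hx
    have hexp : -β - 1 + -β * (γ - 1) = -p := by simp only [γ]; field_simp; ring
    simp only [g, profile, smul_eq_mul, abs_neg, abs_of_pos hβ, one_mul, ← rpow_mul hx.le]
    rw [← hexp, rpow_add hx]
    field_simp
  have hg : IntegrableOn g (Ioi 0) := (GammaIntegral_convergent hγ).const_mul β⁻¹
  refine ⟨((integrableOn_Ioi_comp_rpow_iff g (neg_ne_zero.2 hβ.ne')).2 hg).congr_fun hsubst
    measurableSet_Ioi, ?_⟩
  rw [← setIntegral_congr_fun measurableSet_Ioi hsubst, integral_comp_rpow_Ioi g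
    (neg_ne_zero.2 hβ.ne'), integral_const_mul, ← Gamma_eq_integral hγ, inv_mul_eq_div]

theorem integral_Ioi_profile_rpow_neg {p β l a : ℝ} (hl : 0 < l) (ha : 0 ≤ a) :
    ∫ x in Ioi a, profile p β (l ^ (-β)) x = l ^ (p - 1) * ∫ x in Ioi (l * a), profile p β 1 x := by
  rw [setIntegral_congr_fun measurableSet_Ioi fun x hx => profile_rpow_neg_eq hl
    (ha.trans_lt hx), integral_const_mul, integral_comp_mul_left_Ioi _ _ hl, smul_eq_mul,
    ← mul_assoc, rpow_sub_one hl.ne', div_eq_mul_inv]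

theorem integrableOn_profile {p β s : ℝ} (hp : 1 < p) (hβ : 0 < β) (hs : 0 < s) :
    IntegrableOn (profile p β s) (Ioi 0) := by
  set l := s ^ (-β)⁻¹
  have hl : 0 < l := rpow_pos_of_pos hs _
  have hls : l ^ (-β) = s := rpow_inv_rpow hs.le (neg_ne_zero.2 hβ.ne')
  have h : IntegrableOn (fun x => l ^ p * profile p β 1 (l * x)) (Ioi 0) :=
    ((integrableOn_Ioi_comp_mul_left_iff (profile p β 1) 0 hl).2
      (by simpa using (integrableOn_profile_one_and_integral hp hβ).1)).const_mul (l ^ p)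
  rw [← hls]
  exact h.congr_fun (fun x hx => (profile_rpow_neg_eq hl hx).symm) measurableSet_Ioi

theorem tendsto_integral_Ioi_nhdsWithin_Ici {f : ℝ → ℝ} {a : ℝ} (hf : IntegrableOn f (Ioi a)) :
    Tendsto (fun b => ∫ x in Ioi b, f x) (𝓝[≥] a) (𝓝 (∫ x in Ioi a, f x)) := by
  have hsmall : Tendsto (fun b => ∫ x in Ioc a b, f x) (𝓝[≥] a) (𝓝 0) := by
    have hvol : Tendsto (fun b => volume.restrict (Ioi a) (Ioc a b)) (𝓝[≥] a) (𝓝 0) := by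
      simp only [Measure.restrict_apply measurableSet_Ioc, inter_eq_left.2 Ioc_subset_Ioi_self,
        Real.volume_Ioc]
      have hlen : Tendsto (fun b => b - a) (𝓝[≥] a) (𝓝 0) :=
        ((tendsto_id.sub_const a).mono_left nhdsWithin_le_nhds).trans (by rw [sub_self])
      simpa using ENNReal.tendsto_ofReal hlen
    refine (hf.tendsto_setIntegral_nhds_zero hvol).congr fun b => ?_
    rw [Measure.restrict_restrict measurableSet_Ioc, inter_eq_left.2 Ioc_subset_Ioi_self]
  refine (tendsto_const_nhds.sub hsmall).congr' ?_ |>.trans (by rw [sub_zero])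
  filter_upwards [self_mem_nhdsWithin] with b hb
  rw [sub_eq_iff_eq_add', ← setIntegral_union (Ioc_disjoint_Ioi le_rfl) measurableSet_Ioi
    (hf.mono_set Ioc_subset_Ioi_self) (hf.mono_set (Ioi_subset_Ioi hb)),
    Ioc_union_Ioi_eq_Ioi hb]

theorem tendsto_rpow_mul_integral_Ioi_profile {p β c a : ℝ} (hp : 1 < p) (hβ : 0 < β)
    (hc : 0 < c) (ha : 0 ≤ a) :
    Tendsto (fun t => t ^ ((p - 1) / β) * ∫ x in Ioi a, profile p β (c * t) x) atTop
      (𝓝 (c ^ (-((p - 1) / β)) * (Gamma ((p - 1) / β) / β))) := by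
  set γ := (p - 1) / β
  obtain ⟨hint, hval⟩ := integrableOn_profile_one_and_integral hp hβ
  set l : ℝ → ℝ := fun t => (c * t) ^ (-β)⁻¹
  have hla : Tendsto (fun t => l t * a) atTop (𝓝[≥] 0) := by
    refine tendsto_nhdsWithin_iff.2 ⟨?_, ?_⟩
    · simpa [l] using ((tendsto_rpow_neg_atTop (inv_pos.2 hβ)).comp
        (tendsto_id.const_mul_atTop hc)).mul_const a
    · filter_upwards [eventually_gt_atTop 0] with t ht
      exact mul_nonneg (rpow_nonneg (by positivity) _) ha
  rw [← hval]
  refine (((tendsto_integral_Ioi_nhdsWithin_Ici hint).comp hla).const_mul _).congr' ?_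
  filter_upwards [eventually_gt_atTop 0] with t ht
  have hct : 0 < c * t := mul_pos hc ht
  have hl : 0 < l t := rpow_pos_of_pos hct _
  have hls : l t ^ (-β) = c * t := rpow_inv_rpow hct.le (neg_ne_zero.2 hβ.ne')
  have hlp : l t ^ (p - 1) = c ^ (-γ) * t ^ (-γ) := by
    rw [← mul_rpow hc.le ht.le, ← rpow_mul hct.le]
    congr 1
    simp only [γ]
    field_simp
  rw [Function.comp_apply, ← hls, integral_Ioi_profile_rpow_neg hl ha, hlp, rpow_neg ht.le]
  field_simp [(rpow_pos_of_pos ht γ).ne']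

theorem summand_between_profiles {k e A B α β ε x t : ℝ} (hx : 0 < x) (ht : 0 ≤ t)
    (hε : ε ≤ 1) (hA : 0 < A) (hB : 0 < B)
    (hk : (1 - ε) * (A * x ^ (-α)) ≤ k ∧ k ≤ (1 + ε) * (A * x ^ (-α)))
    (he : (1 - ε) * (B * x ^ (-β)) ≤ e ∧ e ≤ (1 + ε) * (B * x ^ (-β))) :
    (1 - ε) ^ 2 * (A * B) * profile (α + β) β ((1 + ε) * B * t) x ≤ k * e * exp (-(e * t)) ∧
      k * e * exp (-(e * t)) ≤ (1 + ε) ^ 2 * (A * B) * profile (α + β) β ((1 - ε) * B * t) x := by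
  have hprofile : ∀ δ η : ℝ, δ ^ 2 * (A * B) * profile (α + β) β (η * B * t) x
      = δ * (A * x ^ (-α)) * (δ * (B * x ^ (-β))) * exp (-(η * (B * x ^ (-β)) * t)) := by
    intro δ η
    rw [profile, neg_add, rpow_add hx]
    ring_nf
  have hk_lo : 0 ≤ (1 - ε) * (A * x ^ (-α)) := mul_nonneg (sub_nonneg.2 hε) (by positivity)
  have he_lo : 0 ≤ (1 - ε) * (B * x ^ (-β)) := mul_nonneg (sub_nonneg.2 hε) (by positivity)
  have hk_nonneg := hk_lo.trans hk.1
  have he_nonneg := he_lo.trans he.1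
  have hk_hi := hk_nonneg.trans hk.2
  have he_hi := he_nonneg.trans he.2
  rw [hprofile, hprofile]
  constructor
  · gcongr
    exacts [hk.1, he.1, he.2]
  · gcongr
    exacts [hk.2, he.2, he.1]

theorem exists_tail_sandwich {K e : ℕ → ℝ} {A B α β ε : ℝ} (hA : 0 < A) (hB : 0 < B)
    (hp : 1 < α + β) (hβ : 0 < β) (hε : 0 < ε) (hε1 : ε < 1)
    (hK : Tendsto (fun m : ℕ => K m / (A * (m : ℝ) ^ (-α))) atTop (𝓝 1))
    (he : Tendsto (fun m : ℕ => e m / (B * (m : ℝ) ^ (-β))) atTop (𝓝 1)) :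
    ∃ N : ℕ, ∀ t, 0 < t →
      Summable (fun m : ℕ => K (m + N + 1) * e (m + N + 1) * exp (-(e (m + N + 1) * t))) ∧
      (1 - ε) ^ 2 * (A * B) * ∫ x in Ioi (N : ℝ), profile (α + β) β ((1 + ε) * B * t) x
        ≤ ∑' m : ℕ, K (m + N + 1) * e (m + N + 1) * exp (-(e (m + N + 1) * t)) ∧
      ∑' m : ℕ, K (m + N + 1) * e (m + N + 1) * exp (-(e (m + N + 1) * t))
        ≤ (1 + ε) ^ 2 * (A * B) * ∫ x in Ioi (N : ℝ), profile (α + β) β ((1 - ε) * B * t) x := by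
  have hpos : ∀ {C a : ℝ}, 0 < C → ∀ᶠ x : ℝ in atTop, 0 < C * x ^ (-a) := fun hC => by
    filter_upwards [eventually_gt_atTop 0] with x hx
    positivity
  obtain ⟨X, hX⟩ := eventually_atTop.1 <|
    ((eventually_bounds_of_tendsto_div (tendsto_comp_natCeil_div_rpow hK) (hpos hA) hε).and
      (eventually_bounds_of_tendsto_div (tendsto_comp_natCeil_div_rpow he) (hpos hB) hε)).and
      (eventually_gt_atTop 0)
  refine ⟨⌈X⌉₊, fun t ht => ?_⟩
  set N := ⌈X⌉₊
  have hbounds : ∀ m : ℕ, ∀ x ∈ Ioc ((N : ℝ) + m) (N + m + 1),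
      (1 - ε) ^ 2 * (A * B) * profile (α + β) β ((1 + ε) * B * t) x
        ≤ K (m + N + 1) * e (m + N + 1) * exp (-(e (m + N + 1) * t)) ∧
      K (m + N + 1) * e (m + N + 1) * exp (-(e (m + N + 1) * t))
        ≤ (1 + ε) ^ 2 * (A * B) * profile (α + β) β ((1 - ε) * B * t) x := by
    intro m x hx
    have hceil : ⌈x⌉₊ = m + N + 1 := (Nat.ceil_eq_iff (by omega)).2
      ⟨by push_cast; linarith [hx.1], by push_cast; linarith [hx.2]⟩
    obtain ⟨⟨hKx, hex⟩, hx0⟩ := hX x (by linarith [Nat.le_ceil X, hx.1, m.cast_nonneg (α := ℝ)])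
    rw [hceil] at hKx hex
    exact summand_between_profiles hx0 ht.le hε1.le hA hB hKx hex
  have hint : ∀ {C s : ℝ}, 0 < s →
      IntegrableOn (fun x => C * profile (α + β) β s x) (Ioi (N : ℝ)) := fun hs =>
    ((integrableOn_profile hp hβ hs).mono_set (Ioi_subset_Ioi N.cast_nonneg)).const_mul _
  obtain ⟨hsum, hupper⟩ := summable_and_tsum_le_integral_Ioi
    (hint (mul_pos (mul_pos (sub_pos.2 hε1) hB) ht))
    (fun m => ((mul_nonneg (by positivity) (profile_nonneg _ _ _ (by positivity))).trans
      (hbounds m (N + m + 1) ⟨by linarith, le_rfl⟩).1)) (fun m x hx => (hbounds m x hx).2)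
  rw [integral_const_mul] at hupper
  refine ⟨hsum, ?_, hupper⟩
  rw [← integral_const_mul]
  exact integral_Ioi_le_tsum (hint (by positivity)) hsum fun m x hx => (hbounds m x hx).1

theorem tendsto_rpow_mul_sum_exp_neg_mul (γ : ℝ) {k c : ℕ → ℝ} (hc : ∀ m, 0 < c m) (N : ℕ) :
    Tendsto (fun t => t ^ γ * ∑ m ∈ Finset.range N, k m * exp (-(c m * t))) atTop (𝓝 0) := by
  have h : ∀ m ∈ Finset.range N, Tendsto (fun t => k m * (t ^ γ * exp (-c m * t))) atTop (𝓝 0) :=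
    fun m _ => by
      simpa using (tendsto_rpow_mul_exp_neg_mul_atTop_nhds_zero γ (c m) (hc m)).const_mul (k m)
  have hsum := tendsto_finsetSum _ h
  rw [Finset.sum_const_zero] at hsum
  refine hsum.congr fun t => ?_
  rw [Finset.mul_sum]
  exact Finset.sum_congr rfl fun m _ => by rw [neg_mul]; ring

theorem exists_bounds_rpow_mul_tsum {K e : ℕ → ℝ} {A B α β γ ε : ℝ} (hA : 0 < A) (hB : 0 < B)
    (hp : 1 < α + β) (hβ : 0 < β) (hepos : ∀ m : ℕ, 1 ≤ m → 0 < e m)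
    (hK : Tendsto (fun m : ℕ => K m / (A * (m : ℝ) ^ (-α))) atTop (𝓝 1))
    (he : Tendsto (fun m : ℕ => e m / (B * (m : ℝ) ^ (-β))) atTop (𝓝 1))
    (hγ : γ = (α + β - 1) / β) (hε : 0 < ε) (hε1 : ε < 1) :
    ∃ u v : ℝ → ℝ,
      Tendsto u atTop (𝓝 ((1 - ε) ^ 2 * (A * B) * (((1 + ε) * B) ^ (-γ) * (Gamma γ / β)))) ∧
      Tendsto v atTop (𝓝 ((1 + ε) ^ 2 * (A * B) * (((1 - ε) * B) ^ (-γ) * (Gamma γ / β)))) ∧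
      ∀ᶠ t in atTop, u t ≤ t ^ γ * ∑' m : ℕ, K (m + 1) * e (m + 1) * exp (-(e (m + 1) * t)) ∧
        t ^ γ * ∑' m : ℕ, K (m + 1) * e (m + 1) * exp (-(e (m + 1) * t)) ≤ v t := by
  subst hγ
  obtain ⟨N, hN⟩ := exists_tail_sandwich hA hB hp hβ hε hε1 hK he
  have hhead := tendsto_rpow_mul_sum_exp_neg_mul ((α + β - 1) / β)
    (k := fun m => K (m + 1) * e (m + 1)) (fun m => hepos (m + 1) (by omega)) N
  refine ⟨fun t => t ^ ((α + β - 1) / β) * ∑ m ∈ Finset.range N,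
      K (m + 1) * e (m + 1) * exp (-(e (m + 1) * t)) + (1 - ε) ^ 2 * (A * B) *
      (t ^ ((α + β - 1) / β) * ∫ x in Ioi (N : ℝ), profile (α + β) β ((1 + ε) * B * t) x),
    fun t => t ^ ((α + β - 1) / β) * ∑ m ∈ Finset.range N,
      K (m + 1) * e (m + 1) * exp (-(e (m + 1) * t)) + (1 + ε) ^ 2 * (A * B) *
      (t ^ ((α + β - 1) / β) * ∫ x in Ioi (N : ℝ), profile (α + β) β ((1 - ε) * B * t) x),
    ?_, ?_, ?_⟩
  · simpa using hhead.add ((tendsto_rpow_mul_integral_Ioi_profile hp hβ (by positivity)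
      N.cast_nonneg).const_mul ((1 - ε) ^ 2 * (A * B)))
  · simpa using hhead.add ((tendsto_rpow_mul_integral_Ioi_profile hp hβ
      (mul_pos (sub_pos.2 hε1) hB) N.cast_nonneg).const_mul ((1 + ε) ^ 2 * (A * B)))
  · filter_upwards [eventually_gt_atTop 0] with t ht
    obtain ⟨hsum, hlo, hhi⟩ := hN t ht
    have htγ : 0 ≤ t ^ ((α + β - 1) / β) := rpow_nonneg ht.le _
    rw [← ((summable_nat_add_iff (f := fun m => K (m + 1) * e (m + 1) * exp (-(e (m + 1) * t)))
      N).1 hsum).sum_add_tsum_nat_add N, mul_add]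
    constructor
    · linarith [mul_le_mul_of_nonneg_left hlo htγ]
    · linarith [mul_le_mul_of_nonneg_left hhi htγ]

end SeedBank

theorem seedbank_fat_tail_general
    (K e : ℕ → ℝ) (A B α β : ℝ) (hA : 0 < A) (hB : 0 < B)
    (hα : α ≤ 1) (hαβ : 1 < α + β)
    (hepos : ∀ m : ℕ, 1 ≤ m → 0 < e m)
    (hKasym : Tendsto (fun m : ℕ => K m / (A * (m : ℝ) ^ (-α))) atTop (nhds 1))
    (heasym : Tendsto (fun m : ℕ => e m / (B * (m : ℝ) ^ (-β))) atTop (nhds 1))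
    (γ : ℝ) (hγ : γ = (α + β - 1) / β) :
    Tendsto
      (fun t : ℝ => t ^ γ * ∑' m : ℕ, K (m + 1) * e (m + 1) * Real.exp (-(e (m + 1) * t)))
      atTop (nhds ((A / β) * B ^ (1 - γ) * Real.Gamma γ)) := by
  have hβ : 0 < β := by linarith
  have hlim : ∀ f g : ℝ → ℝ, Continuous f → Continuous g → f 0 = 1 → g 0 = 1 →
      Tendsto (fun ε => f ε ^ 2 * (A * B) * ((g ε * B) ^ (-γ) * (Gamma γ / β))) (𝓝[>] 0)
        (𝓝 ((A / β) * B ^ (1 - γ) * Gamma γ)) := by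
    intro f g hf hg hf0 hg0
    have hcont : ContinuousAt
        (fun ε => f ε ^ 2 * (A * B) * ((g ε * B) ^ (-γ) * (Gamma γ / β))) 0 := by
      fun_prop (disch := exact Or.inl (by rw [hg0]; positivity))
    convert hcont.tendsto.mono_left nhdsWithin_le_nhds using 2
    rw [hf0, hg0, one_mul, sub_eq_add_neg, rpow_add hB, rpow_one]
    ring
  refine SeedBank.tendsto_of_eventually_sandwich
    (hlim (fun ε => 1 - ε) (fun ε => 1 + ε) (by fun_prop) (by fun_prop) (by simp) (by simp))
    (hlim (fun ε => 1 + ε) (fun ε => 1 - ε) (by fun_prop) (by fun_prop) (by simp) (by simp))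
    ?_
  filter_upwards [Ioo_mem_nhdsGT one_pos] with ε ⟨hε, hε1⟩
  exact SeedBank.exists_bounds_rpow_mul_tsum hA hB hαβ hβ hepos hKasym heasym hγ hε hε1

/-- Fat-tailed wake-up times from a coloured seed-bank (Remark 2.14, eqs. (2.26)–(2.29)):
if `K m ~ A m^{-α}` and `e m ~ B m^{-β}` with `α ≤ 1 < α + β`, and `γ = (α+β-1)/β`, then
`t^γ * Σ_{m≥1} K_m e_m exp(-e_m t) → (A/β) B^{1-γ} Γ(γ)` as `t → ∞`. -/
theorem seedbank_fat_tail
    (K e : ℕ → ℝ) (A B α β : ℝ) (hA : 0 < A) (hB : 0 < B)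
    (hα : α ≤ 1) (hαβ : 1 < α + β)
    (hKpos : ∀ m : ℕ, 1 ≤ m → 0 < K m) (hepos : ∀ m : ℕ, 1 ≤ m → 0 < e m)
    (hKasym : Tendsto (fun m : ℕ => K m / (A * (m : ℝ) ^ (-α))) atTop (nhds 1))
    (heasym : Tendsto (fun m : ℕ => e m / (B * (m : ℝ) ^ (-β))) atTop (nhds 1))
    (γ : ℝ) (hγ : γ = (α + β - 1) / β) :
    Tendsto
      (fun t : ℝ => t ^ γ * ∑' m : ℕ, K (m + 1) * e (m + 1) * Real.exp (-(e (m + 1) * t)))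
      atTop (nhds ((A / β) * B ^ (1 - γ) * Real.Gamma γ)) :=
  seedbank_fat_tail_general K e A B α β hA hB hα hαβ hepos hKasym heasym γ hγ
end

section
/- Let γ ∈ (0,1) and let (τ_i)_{i≥1} be independent, identically distributed nonnegative random variables on a probability space such that there exist constants c ∈ (0,1] and C₁ ∈ (0,∞) with P(τ₁ > t) ≥ c t^{−γ} for all t ≥ 1 and P(τ₁ ≤ t) ≤ C₁ t for all t ≥ 0. For k ≥ 1 set W_k = k^{−1/γ} Σ_{i=1}^k τ_i. Then sup_{k≥1} E[W_k^{−γ}] < ∞ (the expectations of the nonnegative quantities W_k^{−γ} being taken in [0,∞]). -/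
open Filter MeasureTheory ProbabilityTheory Real

open Set


private lemma aux_geom {x : ℝ} (hx0 : 0 ≤ x) (hx1 : x < 1) (n : ℕ) :
    (n : ℝ) * x ^ n * (1 - x) ≤ 1 := by
  have h1 : (n : ℝ) * x ^ n ≤ ∑ j ∈ Finset.range n, x ^ j := by
    calc (n : ℝ) * x ^ n = ∑ _j ∈ Finset.range n, x ^ n := by
          rw [Finset.sum_const, Finset.card_range, nsmul_eq_mul]
      _ ≤ ∑ j ∈ Finset.range n, x ^ j :=
          Finset.sum_le_sum fun j hj =>
            pow_le_pow_of_le_one hx0 hx1.le (Finset.mem_range.1 hj).le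
  have h2 : (∑ j ∈ Finset.range n, x ^ j) * (1 - x) = 1 - x ^ n := by
    have h := geom_sum_mul x n
    linear_combination -h
  have h3 : (n : ℝ) * x ^ n * (1 - x) ≤ (∑ j ∈ Finset.range n, x ^ j) * (1 - x) :=
    mul_le_mul_of_nonneg_right h1 (by linarith)
  nlinarith [pow_nonneg hx0 n]

private lemma aux_prob_pow {Ω : Type*} [MeasurableSpace Ω] (μ : Measure Ω)
    (τ : ℕ → Ω → ℝ)
    (hnonneg : ∀ i ω, 0 ≤ τ i ω)
    (hindep : iIndepFun τ μ)
    (hident : ∀ i, IdentDistrib (τ i) (τ 1) μ μ)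
    (n : ℕ) (u : ℝ) :
    μ {ω | ∑ i ∈ Finset.Icc 1 n, τ i ω < u} ≤ μ {ω | τ 1 ω < u} ^ n := by
  have hsub : {ω | ∑ i ∈ Finset.Icc 1 n, τ i ω < u} ⊆ ⋂ i ∈ Finset.Icc 1 n, τ i ⁻¹' Iio u := by
    intro ω hω
    simp only [Set.mem_iInter, Set.mem_preimage, Set.mem_Iio]
    intro i hi
    exact lt_of_le_of_lt (Finset.single_le_sum (fun j _ => hnonneg j ω) hi) hω
  calc μ {ω | ∑ i ∈ Finset.Icc 1 n, τ i ω < u}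
      ≤ μ (⋂ i ∈ Finset.Icc 1 n, τ i ⁻¹' Iio u) := measure_mono hsub
    _ = ∏ i ∈ Finset.Icc 1 n, μ (τ i ⁻¹' Iio u) :=
        hindep.meas_biInter fun i _ => ⟨Iio u, measurableSet_Iio, rfl⟩
    _ = ∏ _i ∈ Finset.Icc 1 n, μ (τ 1 ⁻¹' Iio u) :=
        Finset.prod_congr rfl fun i _ => (hident i).measure_mem_eq measurableSet_Iio
    _ = μ {ω | τ 1 ω < u} ^ n := by
        rw [Finset.prod_const, Nat.card_Icc]; rfl

set_option maxHeartbeats 2000000 in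
/-- Lemma 6.3 ('Finite limits'): for i.i.d. nonnegative fat-tailed wake-up times with
`P(τ₁ > t) ≥ c t^{-γ}` for `t ≥ 1` and `P(τ₁ ≤ t) ≤ C₁ t` for `t ≥ 0`, the normalized sums
`W_k = k^{-1/γ} Σ_{i=1}^k τ_i` satisfy `sup_{k ≥ 1} E[W_k^{-γ}] < ∞`. -/
theorem uniform_bound_inverse_moment_stable_sums
    {Ω : Type*} [MeasurableSpace Ω] (μ : Measure Ω) [IsProbabilityMeasure μ]
    (γ : ℝ) (hγ : γ ∈ Set.Ioo (0 : ℝ) 1)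
    (τ : ℕ → Ω → ℝ) (hmeas : ∀ i, Measurable (τ i))
    (hnonneg : ∀ i ω, 0 ≤ τ i ω)
    (hindep : iIndepFun τ μ)
    (hident : ∀ i, IdentDistrib (τ i) (τ 1) μ μ)
    (c C₁ : ℝ) (hc : c ∈ Set.Ioc (0 : ℝ) 1) (hC₁ : 0 < C₁)
    (htail : ∀ t : ℝ, 1 ≤ t → ENNReal.ofReal (c * t ^ (-γ)) ≤ μ {ω | t < τ 1 ω})
    (hdens : ∀ t : ℝ, 0 ≤ t → μ {ω | τ 1 ω ≤ t} ≤ ENNReal.ofReal (C₁ * t)) :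
    (⨆ k : ℕ,
        ∫⁻ ω,
          (ENNReal.ofReal
              (((k + 1 : ℕ) : ℝ) ^ (-(1 / γ)) * ∑ i ∈ Finset.Icc 1 (k + 1), τ i ω)) ^ (-γ)
          ∂μ) < ⊤ := by
  obtain ⟨hγ0, hγ1⟩ := hγ
  obtain ⟨hc0, hc1⟩ := hc
  set b : ℝ := max 1 (C₁ ^ γ) with hbdef
  have hb1 : (1:ℝ) ≤ b := le_max_left _ _
  have hb0 : (0:ℝ) < b := by linarith
  have hγinv : 1 < 1/γ := by rw [lt_div_iff₀ hγ0]; linarith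
  have hbC : C₁ ≤ b ^ (1/γ) := by
    have h1 : C₁ ^ γ ≤ b := le_max_right _ _
    have h2 : (C₁ ^ γ) ^ (1/γ) ≤ b ^ (1/γ) :=
      Real.rpow_le_rpow (Real.rpow_nonneg hC₁.le _) h1 (by positivity)
    rwa [← Real.rpow_mul hC₁.le, mul_one_div, div_self hγ0.ne', Real.rpow_one] at h2
  -- bounds on the distribution function of τ 1
  have hp1 : ∀ u : ℝ, 1 ≤ u → μ {ω | τ 1 ω < u} ≤ ENNReal.ofReal (1 - c * u ^ (-γ)) := by
    intro u hu
    have hmono : μ {ω | τ 1 ω < u} ≤ μ ({ω | u < τ 1 ω}ᶜ) :=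
      measure_mono fun ω h => by simpa using (le_of_lt h : τ 1 ω ≤ u).not_gt
    have hms : MeasurableSet {ω | u < τ 1 ω} := (hmeas 1) measurableSet_Ioi
    rw [prob_compl_eq_one_sub hms] at hmono
    refine hmono.trans (le_trans (tsub_le_tsub_left (htail u hu) 1) (le_of_eq ?_))
    rw [ENNReal.ofReal_sub 1 (by positivity), ENNReal.ofReal_one]
  have hp2 : ∀ u : ℝ, 0 ≤ u → μ {ω | τ 1 ω < u} ≤ ENNReal.ofReal (C₁ * u) := fun u hu =>
    (measure_mono fun ω (h : τ 1 ω < u) => le_of_lt h).trans (hdens u hu)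
  have hp3 : ∀ u : ℝ, u ≤ 1 → μ {ω | τ 1 ω < u} ≤ ENNReal.ofReal (1 - c) := by
    intro u hu
    have hmono : μ {ω | τ 1 ω < u} ≤ μ ({ω | (1:ℝ) < τ 1 ω}ᶜ) :=
      measure_mono fun ω h => by simpa using ((le_of_lt h).trans hu).not_gt
    have hms : MeasurableSet {ω | (1:ℝ) < τ 1 ω} := (hmeas 1) measurableSet_Ioi
    rw [prob_compl_eq_one_sub hms] at hmono
    have htail1 : ENNReal.ofReal c ≤ μ {ω | (1:ℝ) < τ 1 ω} := by
      have h := htail 1 le_rfl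
      rwa [Real.one_rpow, mul_one] at h
    refine hmono.trans (le_trans (tsub_le_tsub_left htail1 1) (le_of_eq ?_))
    rw [ENNReal.ofReal_sub 1 hc0.le, ENNReal.ofReal_one]
  refine lt_of_le_of_lt (iSup_le fun k => ?_)
    (ENNReal.ofReal_lt_top (r := 1/c + b/c + b*γ/(1-γ)))
  set n : ℕ := k + 1 with hndef
  set N : ℝ := ((n : ℕ) : ℝ) with hNdef
  have hn1 : (1:ℝ) ≤ (n:ℝ) := by exact_mod_cast (by omega : 1 ≤ n)
  have hN1 : (1:ℝ) ≤ N := hn1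
  have hN0 : (0:ℝ) < N := by linarith
  have hNn : N = (n : ℝ) := rfl
  set S : Ω → ℝ := fun ω => ∑ i ∈ Finset.Icc 1 n, τ i ω with hSdef
  have hSmeas : Measurable S := Finset.measurable_sum _ fun i _ => hmeas i
  have hSnn : ∀ ω, 0 ≤ S ω := fun ω => Finset.sum_nonneg fun i _ => hnonneg i ω
  have hτ1S : ∀ ω, τ 1 ω ≤ S ω := fun ω =>
    Finset.single_le_sum (f := fun i => τ i ω) (fun j _ => hnonneg j ω)
      (Finset.mem_Icc.2 ⟨le_refl 1, by omega⟩)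
  have hae : ∀ᵐ ω ∂μ, 0 < S ω := by
    rw [ae_iff]
    refine measure_mono_null (fun ω (h : ¬ 0 < S ω) => ?_)
      (le_antisymm ((hdens 0 le_rfl).trans (by simp)) (by simp))
    exact (hτ1S ω).trans (not_lt.1 h)
  set g : Ω → ℝ := fun ω => (N ^ (-(1/γ)) * S ω) ^ (-γ) with hgdef
  have gnn : ∀ ω, 0 ≤ g ω := fun ω =>
    Real.rpow_nonneg (mul_nonneg (Real.rpow_nonneg hN0.le _) (hSnn ω)) _
  have gmeas : Measurable g := (hSmeas.const_mul _).pow measurable_const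
  have hidN : N ^ (1/γ) * N ^ (-(1/γ)) = 1 := by
    rw [← Real.rpow_add hN0, add_neg_cancel, Real.rpow_zero]
  -- the key tail bound
  have hkey : ∀ t : ℝ, 0 < t →
      μ {ω | t < g ω} ≤ μ {ω | τ 1 ω < N ^ (1/γ) * t ^ (-(1/γ))} ^ n := by
    intro t ht
    refine le_trans (measure_mono ?_) (aux_prob_pow μ τ hnonneg hindep hident n _)
    intro ω hω
    simp only [Set.mem_setOf_eq] at hω ⊢
    have hxnn : 0 ≤ N ^ (-(1/γ)) * S ω := mul_nonneg (Real.rpow_nonneg hN0.le _) (hSnn ω)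
    have hx0 : 0 < N ^ (-(1/γ)) * S ω := by
      rcases hxnn.lt_or_eq with h | h
      · exact h
      · exfalso
        rw [hgdef] at hω
        simp only [← h, Real.zero_rpow (neg_ne_zero.2 hγ0.ne')] at hω
        exact absurd (ht.trans hω) (lt_irrefl 0)
    have hmul : (-γ) * (-(1/γ)) = 1 := by field_simp
    have h2 : ((N ^ (-(1/γ)) * S ω) ^ (-γ)) ^ (-(1/γ)) < t ^ (-(1/γ)) :=
      Real.rpow_lt_rpow_of_neg ht hω (by linarith)
    rw [← Real.rpow_mul hxnn, hmul, Real.rpow_one] at h2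
    calc S ω = N ^ (1/γ) * (N ^ (-(1/γ)) * S ω) := by
          rw [← mul_assoc, hidN, one_mul]
      _ < N ^ (1/γ) * t ^ (-(1/γ)) :=
          mul_lt_mul_of_pos_left h2 (Real.rpow_pos_of_pos hN0 _)
  have huval : ∀ t : ℝ, 0 < t → (N ^ (1/γ) * t ^ (-(1/γ))) ^ (-γ) = t / N := by
    intro t ht
    rw [Real.mul_rpow (Real.rpow_nonneg hN0.le _) (Real.rpow_nonneg ht.le _),
      ← Real.rpow_mul hN0.le, ← Real.rpow_mul ht.le]
    have h1 : 1/γ * (-γ) = -1 := by field_simp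
    have h2 : -(1/γ) * (-γ) = 1 := by field_simp
    rw [h1, h2, Real.rpow_one, Real.rpow_neg_one]
    ring
  have hu1 : ∀ t : ℝ, 0 < t → t ≤ N → 1 ≤ N ^ (1/γ) * t ^ (-(1/γ)) := by
    intro t ht htN
    have h := Real.rpow_le_rpow_of_nonpos ht htN (neg_nonpos.2 (by positivity : (0:ℝ) ≤ 1/γ))
    calc (1:ℝ) = N ^ (1/γ) * N ^ (-(1/γ)) := hidN.symm
      _ ≤ N ^ (1/γ) * t ^ (-(1/γ)) :=
          mul_le_mul_of_nonneg_left h (Real.rpow_nonneg hN0.le _)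
  have hu2 : ∀ t : ℝ, N ≤ t → N ^ (1/γ) * t ^ (-(1/γ)) ≤ 1 := by
    intro t htN
    have h := Real.rpow_le_rpow_of_nonpos hN0 htN (neg_nonpos.2 (by positivity : (0:ℝ) ≤ 1/γ))
    calc N ^ (1/γ) * t ^ (-(1/γ)) ≤ N ^ (1/γ) * N ^ (-(1/γ)) :=
          mul_le_mul_of_nonneg_left h (Real.rpow_nonneg hN0.le _)
      _ = 1 := hidN
  -- Region 1 : (0, N]
  have hB1 : ∫⁻ t in Ioc (0:ℝ) N, μ {ω | t < g ω} ≤ ENNReal.ofReal (1/c) := by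
    have hptw : ∀ t ∈ Ioc (0:ℝ) N, μ {ω | t < g ω} ≤ ENNReal.ofReal ((1 - c/N*t) ^ n) := by
      intro t ht
      obtain ⟨ht0, htN⟩ := ht
      have huγ : (N ^ (1/γ) * t ^ (-(1/γ))) ^ (-γ) = t / N := huval t ht0
      have htN' : t/N ≤ 1 := (div_le_one hN0).2 htN
      have hcu0 : 0 ≤ 1 - c * (N ^ (1/γ) * t ^ (-(1/γ))) ^ (-γ) := by
        rw [huγ]; nlinarith
      calc μ {ω | t < g ω} ≤ μ {ω | τ 1 ω < N ^ (1/γ) * t ^ (-(1/γ))} ^ n := hkey t ht0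
        _ ≤ (ENNReal.ofReal (1 - c * (N ^ (1/γ) * t ^ (-(1/γ))) ^ (-γ))) ^ n :=
            pow_le_pow_left' (hp1 _ (hu1 t ht0 htN)) n
        _ = ENNReal.ofReal ((1 - c * (N ^ (1/γ) * t ^ (-(1/γ))) ^ (-γ)) ^ n) :=
            (ENNReal.ofReal_pow hcu0 n).symm
        _ = ENNReal.ofReal ((1 - c/N*t) ^ n) := by rw [huγ]; ring_nf
    refine (setLIntegral_mono' measurableSet_Ioc hptw).trans ?_
    have hcont : Continuous (fun t : ℝ => (1 - c/N*t)^n) :=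
      (continuous_const.sub (continuous_const.mul continuous_id)).pow n
    have hint : IntegrableOn (fun t : ℝ => (1 - c/N*t)^n) (Ioc 0 N) := hcont.integrableOn_Ioc
    have hnnae : 0 ≤ᵐ[volume.restrict (Ioc (0:ℝ) N)] fun t => (1 - c/N*t)^n := by
      filter_upwards [ae_restrict_mem measurableSet_Ioc] with t ht
      have h1 : c/N*t ≤ c := by
        rw [div_mul_eq_mul_div, div_le_iff₀ hN0]
        nlinarith [ht.2, ht.1.le, hc0]
      exact pow_nonneg (by linarith) n
    rw [← ofReal_integral_eq_lintegral_ofReal hint hnnae]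
    refine ENNReal.ofReal_le_ofReal ?_
    rw [← intervalIntegral.integral_of_le (by linarith : (0:ℝ) ≤ N)]
    have hderiv : ∀ x ∈ Set.uIcc (0:ℝ) N,
        HasDerivAt (fun t => -(N/(c*(n+1))) * (1 - c/N*t)^(n+1)) ((1 - c/N*x)^n) x := by
      intro x _
      have h1 : HasDerivAt (fun t : ℝ => 1 - c/N*t) (-(c/N)) x := by
        simpa using ((hasDerivAt_id x).const_mul (c/N)).const_sub 1
      have h2 := (h1.pow (n+1)).const_mul (-(N/(c*(n+1))))
      refine h2.congr_deriv ?_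
      simp only [Nat.add_sub_cancel]
      push_cast
      field_simp
    rw [intervalIntegral.integral_eq_sub_of_hasDerivAt hderiv (hcont.intervalIntegrable _ _)]
    have e1 : 1 - c/N*N = 1-c := by field_simp
    rw [e1]
    have h1c : (0:ℝ) ≤ (1-c)^(n+1) := pow_nonneg (by linarith) _
    have hA0 : (0:ℝ) ≤ N/(c*(n+1)) := by positivity
    have hA : N/(c*(n+1)) ≤ 1/c := by
      rw [div_le_div_iff₀ (by positivity) hc0]
      nlinarith [hn1, hc0]
    have e2 : 1 - c/N*0 = 1 := by ring
    rw [e2, one_pow]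
    nlinarith [h1c, hA, hA0]
  -- Region 2 : (N, b*N]
  have hB2 : ∫⁻ t in Ioc N (b*N), μ {ω | t < g ω} ≤ ENNReal.ofReal (b/c) := by
    have hptw : ∀ t ∈ Ioc N (b*N), μ {ω | t < g ω} ≤ ENNReal.ofReal ((1-c)^n) := by
      intro t ht
      have ht0 : 0 < t := lt_of_lt_of_le hN0 ht.1.le
      calc μ {ω | t < g ω} ≤ μ {ω | τ 1 ω < N ^ (1/γ) * t ^ (-(1/γ))} ^ n := hkey t ht0
        _ ≤ (ENNReal.ofReal (1-c)) ^ n := pow_le_pow_left' (hp3 _ (hu2 t ht.1.le)) n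
        _ = ENNReal.ofReal ((1-c)^n) := (ENNReal.ofReal_pow (by linarith) n).symm
    refine (setLIntegral_mono' measurableSet_Ioc hptw).trans ?_
    rw [setLIntegral_const, Real.volume_Ioc, ← ENNReal.ofReal_mul (pow_nonneg (by linarith) n)]
    refine ENNReal.ofReal_le_ofReal ?_
    have hg' : N * (1-c)^n * c ≤ 1 := by
      calc N * (1-c)^n * c = (n:ℝ) * (1-c)^n * (1 - (1-c)) := by rw [hNn]; ring
        _ ≤ 1 := aux_geom (by linarith) (by linarith) n
    rw [le_div_iff₀ hc0]
    nlinarith [mul_nonneg (sub_nonneg.2 hb1) (sub_nonneg.2 hg'),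
      pow_nonneg (show (0:ℝ) ≤ 1-c by linarith) n, hN0, hb1, hc0]
  -- Region 3 : (b*N, ∞)
  have hbN0 : (0:ℝ) < b*N := by positivity
  have he1 : (-(1/γ)) * (n:ℝ) < -1 := by nlinarith [hγinv, hn1]
  have hB3 : ∫⁻ t in Ioi (b*N), μ {ω | t < g ω} ≤ ENNReal.ofReal (b*γ/(1-γ)) := by
    have hptw : ∀ t ∈ Ioi (b*N), μ {ω | t < g ω} ≤
        ENNReal.ofReal ((C₁ * N^(1/γ))^n * t ^ ((-(1/γ)) * (n:ℝ))) := by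
      intro t ht
      have ht0 : 0 < t := lt_trans hbN0 ht
      have hu0 : (0:ℝ) ≤ N ^ (1/γ) * t ^ (-(1/γ)) := by positivity
      calc μ {ω | t < g ω} ≤ μ {ω | τ 1 ω < N ^ (1/γ) * t ^ (-(1/γ))} ^ n := hkey t ht0
        _ ≤ (ENNReal.ofReal (C₁ * (N ^ (1/γ) * t ^ (-(1/γ))))) ^ n :=
            pow_le_pow_left' (hp2 _ hu0) n
        _ = ENNReal.ofReal ((C₁ * (N ^ (1/γ) * t ^ (-(1/γ))))^n) :=
            (ENNReal.ofReal_pow (by positivity) n).symm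
        _ = ENNReal.ofReal ((C₁ * N^(1/γ))^n * t ^ ((-(1/γ)) * (n:ℝ))) := by
            congr 1
            rw [← mul_assoc, mul_pow, ← Real.rpow_natCast (t ^ (-(1/γ))) n,
              ← Real.rpow_mul ht0.le]
    refine (setLIntegral_mono' measurableSet_Ioi hptw).trans ?_
    have hint : IntegrableOn (fun t : ℝ => (C₁ * N^(1/γ))^n * t ^ ((-(1/γ)) * (n:ℝ)))
        (Ioi (b*N)) := (integrableOn_Ioi_rpow_of_lt he1 hbN0).const_mul _
    have hnnae : 0 ≤ᵐ[volume.restrict (Ioi (b*N))]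
        fun t : ℝ => (C₁ * N^(1/γ))^n * t ^ ((-(1/γ)) * (n:ℝ)) := by
      filter_upwards [ae_restrict_mem measurableSet_Ioi] with t ht
      have ht0 : (0:ℝ) < t := lt_trans hbN0 ht
      exact mul_nonneg (pow_nonneg (by positivity) n) (Real.rpow_nonneg ht0.le _)
    rw [← ofReal_integral_eq_lintegral_ofReal hint hnnae]
    refine ENNReal.ofReal_le_ofReal ?_
    rw [MeasureTheory.integral_const_mul, integral_Ioi_rpow_of_lt he1 hbN0]
    -- algebra
    have hkey1 : (C₁ * N^(1/γ))^n * (b*N) ^ ((-(1/γ)) * (n:ℝ)) ≤ 1 := by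
      have hsplit : (b*N) ^ ((-(1/γ)) * (n:ℝ)) = (b ^ (-(1/γ)) * N ^ (-(1/γ)))^n := by
        rw [Real.rpow_mul_natCast hbN0.le, Real.mul_rpow hb0.le hN0.le]
      rw [hsplit, ← mul_pow]
      have hid2 : C₁ * N^(1/γ) * (b ^ (-(1/γ)) * N ^ (-(1/γ))) = C₁ * b ^ (-(1/γ)) := by
        calc C₁ * N^(1/γ) * (b ^ (-(1/γ)) * N ^ (-(1/γ)))
            = C₁ * b ^ (-(1/γ)) * (N^(1/γ) * N ^ (-(1/γ))) := by ring
          _ = C₁ * b ^ (-(1/γ)) := by rw [hidN, mul_one]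
      rw [hid2]
      have hCb : C₁ * b ^ (-(1/γ)) ≤ 1 := by
        rw [Real.rpow_neg hb0.le, ← div_eq_mul_inv,
          div_le_one (Real.rpow_pos_of_pos hb0 _)]
        exact hbC
      exact pow_le_one₀ (by positivity) hCb
    have hq0 : 0 ≤ (C₁ * N^(1/γ))^n * (b*N) ^ ((-(1/γ)) * (n:ℝ)) * (b*N) :=
      mul_nonneg (mul_nonneg (pow_nonneg (by positivity) n)
        (Real.rpow_nonneg hbN0.le _)) hbN0.le
    have hqle : (C₁ * N^(1/γ))^n * (b*N) ^ ((-(1/γ)) * (n:ℝ)) * (b*N) ≤ b*N := by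
      nlinarith [mul_nonneg (sub_nonneg.2 hkey1) hbN0.le]
    have hlhs : (C₁ * N^(1/γ))^n * (-(b*N) ^ ((-(1/γ)) * (n:ℝ) + 1) / ((-(1/γ)) * (n:ℝ) + 1))
        = ((C₁ * N^(1/γ))^n * (b*N) ^ ((-(1/γ)) * (n:ℝ)) * (b*N))
          * (-((-(1/γ)) * (n:ℝ) + 1))⁻¹ := by
      rw [Real.rpow_add hbN0, Real.rpow_one, inv_neg]
      ring
    rw [hlhs]
    have hD : -((-(1/γ)) * (n:ℝ) + 1) = (n:ℝ)/γ - 1 := by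
      field_simp
      linarith
    rw [hD]
    have hDpos : (0:ℝ) < (n:ℝ)/γ - 1 := by
      have h8 : (1:ℝ)/γ ≤ (n:ℝ)/γ := by gcongr
      linarith
    calc (C₁ * N^(1/γ))^n * (b*N) ^ ((-(1/γ)) * (n:ℝ)) * (b*N) * ((n:ℝ)/γ - 1)⁻¹
        ≤ (b*N) * ((n:ℝ)/γ - 1)⁻¹ :=
          mul_le_mul_of_nonneg_right hqle (inv_nonneg.2 hDpos.le)
      _ ≤ b*γ/(1-γ) := by
          rw [← div_eq_mul_inv, div_le_div_iff₀ hDpos (by linarith : (0:ℝ) < 1-γ)]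
          have h7 : b*γ*((n:ℝ)/γ - 1) = b*((n:ℝ) - γ) := by
            field_simp
          rw [h7, hNn]
          nlinarith [mul_nonneg (mul_nonneg hb0.le hγ0.le) (sub_nonneg.2 hn1)]
  -- put the three regions together
  have hNbN : N ≤ b*N := by nlinarith
  have hsplitset : Ioi (0:ℝ) = Ioc 0 N ∪ (Ioc N (b*N) ∪ Ioi (b*N)) := by
    rw [Set.Ioc_union_Ioi_eq_Ioi hNbN, Set.Ioc_union_Ioi_eq_Ioi (by linarith : (0:ℝ) ≤ N)]
  calc ∫⁻ ω, (ENNReal.ofReal (N ^ (-(1/γ)) * S ω)) ^ (-γ) ∂μ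
      = ∫⁻ ω, ENNReal.ofReal (g ω) ∂μ := by
        refine lintegral_congr_ae ?_
        filter_upwards [hae] with ω hω
        exact ENNReal.ofReal_rpow_of_pos (by positivity)
    _ = ∫⁻ t in Ioi (0:ℝ), μ {ω | t < g ω} :=
        lintegral_eq_lintegral_meas_lt μ (Eventually.of_forall gnn) gmeas.aemeasurable
    _ = (∫⁻ t in Ioc (0:ℝ) N, μ {ω | t < g ω}) + ((∫⁻ t in Ioc N (b*N), μ {ω | t < g ω})
          + ∫⁻ t in Ioi (b*N), μ {ω | t < g ω}) := by
        rw [hsplitset, lintegral_union (measurableSet_Ioc.union measurableSet_Ioi)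
          (by rw [Set.Ioc_union_Ioi_eq_Ioi hNbN]; exact Set.Ioc_disjoint_Ioi le_rfl),
          lintegral_union measurableSet_Ioi (Set.Ioc_disjoint_Ioi le_rfl)]
    _ ≤ ENNReal.ofReal (1/c) + (ENNReal.ofReal (b/c) + ENNReal.ofReal (b*γ/(1-γ))) :=
        add_le_add hB1 (add_le_add hB2 hB3)
    _ = ENNReal.ofReal (1/c + b/c + b*γ/(1-γ)) := by
        rw [← ENNReal.ofReal_add (div_nonneg hb0.le hc0.le)
            (div_nonneg (mul_nonneg hb0.le hγ0.le) (by linarith)),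
          ← ENNReal.ofReal_add (div_nonneg zero_le_one hc0.le)
            (add_nonneg (div_nonneg hb0.le hc0.le)
              (div_nonneg (mul_nonneg hb0.le hγ0.le) (by linarith)))]
        ring_nf
end

section
/- Let B, D ∈ (0,∞) and γ ∈ (1,2), and define f(t) = ∫_{[−π,π]²} exp( −t [ B(φ₁² + φ₂²) + D |φ₁ + φ₂|^γ ] ) dφ₁ dφ₂ for t > 0. Then f(t) ≍ t^{−(1/γ + 1/2)} as t → ∞, i.e., there exist constants 0 < c₁ ≤ c₂ < ∞ and t₀ ≥ 1 such that c₁ t^{−(1/γ+1/2)} ≤ f(t) ≤ c₂ t^{−(1/γ+1/2)} for all t ≥ t₀. In particular, ∫_1^∞ f(t) dt < ∞. -/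
/-!
Upper bound: dropping `Bφ₂²` from the exponent and integrating over all of `ℝ²`, the shear
`(φ₁, φ₂) ↦ (φ₁, φ₁ + φ₂)` factors the integral into a Gaussian integral, of size `t^(-1/2)`,
times `∫ exp (-tD|u|^γ) du`, of size `t^(-1/γ)`.

Lower bound: on the parallelogram `0 ≤ φ₁ ≤ t^(-1/2)`, `0 ≤ φ₁ + φ₂ ≤ t^(-1/γ)`, whose area
is `t^(-(1/γ + 1/2))`, `t` times the exponent stays below `2B + D`, since `t^(-1/γ) ≤ t^(-1/2)`
bounds `|φ₂|` by `t^(-1/2)` there.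

Since `1/γ + 1/2 > 1` for `γ < 2`, the upper bound makes `f` integrable on `(1, ∞)`.
-/

open Filter MeasureTheory Real

section Shear

variable {G : Type*} [MeasurableSpace G] [AddGroup G] [MeasurableAdd₂ G]
  {μ ν : Measure G} [SFinite μ] [SFinite ν] [ν.IsAddLeftInvariant]

theorem integrable_mul_comp_add [MeasurableNeg G] {g h : G → ℝ} (hg : Integrable g μ)
    (hh : Integrable h ν) :
    Integrable (fun z : G × G ↦ g z.1 * h (z.1 + z.2)) (μ.prod ν) :=
  ((measurePreserving_prod_add μ ν).integrable_comp_emb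
    (MeasurableEquiv.shearAddRight G).measurableEmbedding).mpr (hg.mul_prod hh)

theorem integral_mul_comp_add [MeasurableNeg G] (g h : G → ℝ) :
    ∫ z, g z.1 * h (z.1 + z.2) ∂μ.prod ν = (∫ x, g x ∂μ) * ∫ y, h y ∂ν := by
  rw [← integral_prod_mul]
  exact (measurePreserving_prod_add μ ν).integral_comp
    (MeasurableEquiv.shearAddRight G).measurableEmbedding (fun z ↦ g z.1 * h z.2)

theorem measure_shear_preimage_prod (s t : Set G) (hs : MeasurableSet s) (ht : MeasurableSet t) :
    μ.prod ν ((fun z : G × G ↦ (z.1, z.1 + z.2)) ⁻¹' s ×ˢ t) = μ s * ν t := by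
  rw [(measurePreserving_prod_add μ ν).measure_preimage (hs.prod ht).nullMeasurableSet,
    Measure.prod_prod]

end Shear

theorem integral_exp_neg_mul_abs_rpow {b γ : ℝ} (hb : 0 < b) (hγ : 0 < γ) :
    ∫ x : ℝ, exp (-b * |x| ^ γ) = 2 * (b ^ (-1 / γ) * Gamma (1 / γ + 1)) := by
  rw [integral_comp_abs (f := fun x ↦ exp (-b * x ^ γ)), integral_exp_neg_mul_rpow hγ hb]

theorem integrable_exp_neg_mul_abs_rpow {b γ : ℝ} (hb : 0 < b) (hγ : 0 < γ) :
    Integrable fun x : ℝ ↦ exp (-b * |x| ^ γ) := by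
  refine .of_integral_ne_zero ?_
  rw [integral_exp_neg_mul_abs_rpow hb hγ]
  have := Gamma_pos_of_pos (show 0 < 1 / γ + 1 by positivity)
  positivity

theorem integrableOn_Ioi_of_norm_le_rpow {E : Type*} [NormedAddCommGroup E] {f : ℝ → E}
    {a C p : ℝ} (ha : 0 < a) (hp : 1 < p)
    (hf : AEStronglyMeasurable f (volume.restrict (Set.Ioi a)))
    (hle : ∀ t ∈ Set.Ioi a, ‖f t‖ ≤ C * t ^ (-p)) : IntegrableOn f (Set.Ioi a) :=
  Integrable.mono' ((integrableOn_Ioi_rpow_of_lt (by linarith) ha).const_mul C) hf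
    ((ae_restrict_mem measurableSet_Ioi).mono hle)

theorem integrable_exp_neg_mul_sq_mul_exp_neg_mul_abs_add_rpow {b c γ : ℝ} (hb : 0 < b)
    (hc : 0 < c) (hγ : 0 < γ) :
    Integrable fun φ : ℝ × ℝ ↦ exp (-b * φ.1 ^ 2) * exp (-c * |φ.1 + φ.2| ^ γ) := by
  rw [Measure.volume_eq_prod]
  exact integrable_mul_comp_add (integrable_exp_neg_mul_sq hb)
    (integrable_exp_neg_mul_abs_rpow hc hγ)

theorem integral_exp_neg_mul_sq_mul_exp_neg_mul_abs_add_rpow (b : ℝ) {c γ : ℝ} (hc : 0 < c)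
    (hγ : 0 < γ) :
    ∫ φ : ℝ × ℝ, exp (-b * φ.1 ^ 2) * exp (-c * |φ.1 + φ.2| ^ γ)
      = √(π / b) * (2 * (c ^ (-1 / γ) * Gamma (1 / γ + 1))) := by
  rw [Measure.volume_eq_prod, integral_mul_comp_add (fun x ↦ exp (-b * x ^ 2))
    (fun u ↦ exp (-c * |u| ^ γ)), integral_gaussian, integral_exp_neg_mul_abs_rpow hc hγ]

section LaplaceKernel

variable {B D γ : ℝ}

noncomputable def laplaceKernel (B D γ t : ℝ) (φ : ℝ × ℝ) : ℝ :=
  exp (-t * (B * (φ.1 ^ 2 + φ.2 ^ 2) + D * |φ.1 + φ.2| ^ γ))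

theorem continuous_uncurry_laplaceKernel (hγ : 0 < γ) :
    Continuous (Function.uncurry (laplaceKernel B D γ)) := by
  unfold laplaceKernel
  fun_prop (disch := exact hγ.le)

theorem laplaceKernel_le (hB : 0 ≤ B) {t : ℝ} (ht : 0 ≤ t) (φ : ℝ × ℝ) :
    laplaceKernel B D γ t φ
      ≤ exp (-(t * B) * φ.1 ^ 2) * exp (-(t * D) * |φ.1 + φ.2| ^ γ) := by
  rw [laplaceKernel, ← exp_add]
  gcongr
  nlinarith [mul_nonneg (mul_nonneg ht hB) (sq_nonneg φ.2)]

theorem exp_neg_le_laplaceKernel (hB : 0 ≤ B) (hD : 0 ≤ D) (hγ : 0 < γ) {t r a x y : ℝ}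
    (ht : 0 ≤ t) (hr : t * r ^ 2 ≤ 1) (ha : t * a ^ γ ≤ 1) (har : a ≤ r)
    (hx : x ∈ Set.Icc 0 r) (hxy : x + y ∈ Set.Icc 0 a) :
    exp (-(2 * B + D)) ≤ laplaceKernel B D γ t (x, y) := by
  obtain ⟨hx0, hxr⟩ := hx
  obtain ⟨hs0, hsa⟩ := hxy
  have hx2 : x ^ 2 ≤ r ^ 2 := pow_le_pow_left₀ hx0 hxr 2
  have hy2 : y ^ 2 ≤ r ^ 2 := sq_le_sq' (by linarith) (by linarith)
  have hsγ : |x + y| ^ γ ≤ a ^ γ := by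
    rw [abs_of_nonneg hs0]
    exact rpow_le_rpow hs0 hsa hγ.le
  rw [laplaceKernel]
  gcongr
  nlinarith [mul_le_mul_of_nonneg_left hx2 (mul_nonneg ht hB),
    mul_le_mul_of_nonneg_left hy2 (mul_nonneg ht hB),
    mul_le_mul_of_nonneg_left hsγ (mul_nonneg ht hD)]

theorem setIntegral_laplaceKernel_le (hB : 0 < B) (hD : 0 < D) (hγ : 0 < γ) {t : ℝ} (ht : 0 < t)
    (S : Set (ℝ × ℝ)) :
    ∫ φ in S, laplaceKernel B D γ t φ
      ≤ √(π / B) * (2 * (D ^ (-1 / γ) * Gamma (1 / γ + 1))) * t ^ (-(1 / γ + 1 / 2)) := by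
  have hdom := integrable_exp_neg_mul_sq_mul_exp_neg_mul_abs_add_rpow (mul_pos ht hB)
    (mul_pos ht hD) hγ
  calc ∫ φ in S, laplaceKernel B D γ t φ
      ≤ ∫ φ in S, exp (-(t * B) * φ.1 ^ 2) * exp (-(t * D) * |φ.1 + φ.2| ^ γ) :=
        integral_mono_of_nonneg (.of_forall fun φ ↦ (exp_pos _).le) hdom.integrableOn
          (.of_forall (laplaceKernel_le hB.le ht.le))
    _ ≤ ∫ φ : ℝ × ℝ, exp (-(t * B) * φ.1 ^ 2) * exp (-(t * D) * |φ.1 + φ.2| ^ γ) :=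
        setIntegral_le_integral hdom (.of_forall fun φ ↦ by positivity)
    _ = √(π / (t * B)) * (2 * ((t * D) ^ (-1 / γ) * Gamma (1 / γ + 1))) :=
        integral_exp_neg_mul_sq_mul_exp_neg_mul_abs_add_rpow _ (mul_pos ht hD) hγ
    _ = _ := by
      have hsqrt : √(π / (t * B)) = √(π / B) * t ^ (-(1 / 2) : ℝ) := by
        rw [mul_comm t, ← div_div, sqrt_div' _ ht.le, sqrt_eq_rpow t, rpow_neg ht.le,
          div_eq_mul_inv]
      rw [hsqrt, mul_rpow ht.le hD.le, neg_add, rpow_add ht, neg_div]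
      ring

theorem exp_neg_mul_rpow_le_setIntegral_laplaceKernel (hB : 0 ≤ B) (hD : 0 ≤ D)
    (hγ : γ ∈ Set.Ioc 0 2) {t : ℝ} (ht : 1 ≤ t) :
    exp (-(2 * B + D)) * t ^ (-(1 / γ + 1 / 2))
      ≤ ∫ φ in Set.Icc (-π) π ×ˢ Set.Icc (-π) π, laplaceKernel B D γ t φ := by
  obtain ⟨hγ0, hγ2⟩ := hγ
  have ht0 : 0 < t := by linarith
  set r := t ^ (-(1 / 2) : ℝ)
  set a := t ^ (-(1 / γ))
  have hr : t * r ^ 2 = 1 := by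
    rw [← rpow_natCast, ← rpow_mul ht0.le, show -(1 / 2 : ℝ) * (2 : ℕ) = -1 by norm_num,
      rpow_neg_one, mul_inv_cancel₀ ht0.ne']
  have ha : t * a ^ γ = 1 := by
    rw [← rpow_mul ht0.le, neg_mul, one_div, inv_mul_cancel₀ hγ0.ne', rpow_neg_one,
      mul_inv_cancel₀ ht0.ne']
  have har : a ≤ r := rpow_le_rpow_of_exponent_le ht (by gcongr)
  have hr1 : r ≤ 1 := rpow_le_one_of_one_le_of_nonpos ht (by norm_num)
  set R := (fun φ : ℝ × ℝ ↦ (φ.1, φ.1 + φ.2)) ⁻¹' Set.Icc 0 r ×ˢ Set.Icc 0 a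
  have hRmeas : MeasurableSet R :=
    (measurable_fst.prodMk (measurable_fst.add measurable_snd))
      (measurableSet_Icc.prod measurableSet_Icc)
  have hvol : volume R = .ofReal r * .ofReal a := by
    rw [Measure.volume_eq_prod,
      measure_shear_preimage_prod _ _ measurableSet_Icc measurableSet_Icc, Real.volume_Icc,
      Real.volume_Icc, sub_zero, sub_zero]
  have hRS : R ⊆ Set.Icc (-π) π ×ˢ Set.Icc (-π) π := by
    rintro ⟨x, y⟩ ⟨⟨hx0, hxr⟩, hs0, hsa⟩
    have := pi_gt_three
    exact ⟨⟨by linarith, by linarith⟩, by linarith, by linarith⟩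
  have hint : IntegrableOn (laplaceKernel B D γ t) (Set.Icc (-π) π ×ˢ Set.Icc (-π) π) :=
    ((continuous_uncurry_laplaceKernel hγ0).comp (continuous_const.prodMk continuous_id))
      |>.continuousOn.integrableOn_compact (isCompact_Icc.prod isCompact_Icc)
  calc exp (-(2 * B + D)) * t ^ (-(1 / γ + 1 / 2)) = exp (-(2 * B + D)) * volume.real R := by
        rw [measureReal_def, hvol, ENNReal.toReal_mul, ENNReal.toReal_ofReal (by positivity),
          ENNReal.toReal_ofReal (by positivity), ← rpow_add ht0]
        ring_nf
    _ ≤ ∫ φ in R, laplaceKernel B D γ t φ :=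
        setIntegral_ge_of_const_le_real hRmeas
          (hvol ▸ ENNReal.mul_ne_top ENNReal.ofReal_ne_top ENNReal.ofReal_ne_top)
          (fun φ hφ ↦ exp_neg_le_laplaceKernel hB hD hγ0 ht0.le hr.le ha.le har hφ.1 hφ.2)
          (hint.mono_set hRS)
    _ ≤ ∫ φ in Set.Icc (-π) π ×ˢ Set.Icc (-π) π, laplaceKernel B D γ t φ :=
        setIntegral_mono_set hint (.of_forall fun _ ↦ (exp_pos _).le) hRS.eventuallyLE

end LaplaceKernel

/-- Laplace asymptotics (eqs. (6.36)–(6.38)) for the counterexample with asymmetric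
migration: for `B, D > 0` and `γ ∈ (1,2)`, the integral
`f(t) = ∫_{[-π,π]²} exp(-t[B(φ₁²+φ₂²) + D|φ₁+φ₂|^γ]) dφ` satisfies
`f(t) ≍ t^{-(1/γ+1/2)}` as `t → ∞`; in particular `∫_1^∞ f(t) dt < ∞`. -/
theorem laplace_asymptotics_asymmetric_migration
    (B D γ : ℝ) (hB : 0 < B) (hD : 0 < D) (hγ : γ ∈ Set.Ioo (1 : ℝ) 2)
    (f : ℝ → ℝ)
    (hf : ∀ t : ℝ, f t =
      ∫ φ in (Set.Icc (-Real.pi) Real.pi ×ˢ Set.Icc (-Real.pi) Real.pi),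
        Real.exp (-t * (B * (φ.1 ^ 2 + φ.2 ^ 2) + D * |φ.1 + φ.2| ^ γ))) :
    (∃ c₁ c₂ t₀ : ℝ, 0 < c₁ ∧ c₁ ≤ c₂ ∧ 1 ≤ t₀ ∧
      ∀ t : ℝ, t₀ ≤ t →
        c₁ * t ^ (-(1 / γ + 1 / 2)) ≤ f t ∧ f t ≤ c₂ * t ^ (-(1 / γ + 1 / 2)))
    ∧ MeasureTheory.IntegrableOn f (Set.Ioi (1 : ℝ)) := by
  obtain ⟨hγ1, hγ2⟩ := hγ
  have hγ0 : 0 < γ := by linarith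
  have hf' : f = fun t ↦ ∫ φ in Set.Icc (-π) π ×ˢ Set.Icc (-π) π, laplaceKernel B D γ t φ :=
    funext hf
  set C := √(π / B) * (2 * (D ^ (-1 / γ) * Gamma (1 / γ + 1)))
  set c := exp (-(2 * B + D))
  have upper (t : ℝ) (ht : 1 ≤ t) : f t ≤ C * t ^ (-(1 / γ + 1 / 2)) :=
    hf' ▸ setIntegral_laplaceKernel_le hB hD hγ0 (by linarith) _
  have lower (t : ℝ) (ht : 1 ≤ t) : c * t ^ (-(1 / γ + 1 / 2)) ≤ f t :=
    hf' ▸ exp_neg_mul_rpow_le_setIntegral_laplaceKernel hB.le hD.le ⟨hγ0, hγ2.le⟩ ht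
  refine ⟨⟨c, max C c, 1, exp_pos _, le_max_right _ _, le_rfl, fun t ht =>
    ⟨lower t ht, (upper t ht).trans (by gcongr; exact le_max_left _ _)⟩⟩, ?_⟩
  have hcont : Continuous f := hf' ▸ continuous_parametric_integral_of_continuous
    (continuous_uncurry_laplaceKernel hγ0) (isCompact_Icc.prod isCompact_Icc)
  have hp : 1 < 1 / γ + 1 / 2 := by
    have : 1 / 2 < 1 / γ := by gcongr
    linarith
  refine integrableOn_Ioi_of_norm_le_rpow (C := C) one_pos hp hcont.aestronglyMeasurable
    fun t ht ↦ ?_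
  rw [norm_of_nonneg ((lower t ht.le).trans'
    (mul_nonneg (exp_pos _).le (rpow_nonneg (zero_le_one.trans ht.le) _)))]
  exact upper t ht.le
end

section
/- Let c₁^A, c₂^A, c₁^D, c₂^D ∈ (0,∞) and let z_A, z_{D₁}, z_{D₂} : ℝ → ℝ be differentiable functions satisfying, for all t ≥ 0, z_A'(t) = c₁^D z_{D₁}(t) − c₁^A z_A(t) + c₂^D z_{D₂}(t) − c₂^A z_A(t), z_{D₁}'(t) = c₁^A z_A(t) − c₁^D z_{D₁}(t), z_{D₂}'(t) = c₂^A z_A(t) − c₂^D z_{D₂}(t), with z_A(0) + z_{D₁}(0) + z_{D₂}(0) = 1. Then z_A(t) + z_{D₁}(t) + z_{D₂}(t) = 1 for all t ≥ 0, and lim_{t→∞} z_A(t) = 1/(1 + c₁^A/c₁^D + c₂^A/c₂^D), lim_{t→∞} z_{D₁}(t) = (c₁^A/c₁^D)/(1 + c₁^A/c₁^D + c₂^A/c₂^D), lim_{t→∞} z_{D₂}(t) = (c₂^A/c₂^D)/(1 + c₁^A/c₁^D + c₂^A/c₂^D). -/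
/-!
Summing the three equations shows that `z_A + z_{D₁} + z_{D₂}` has derivative zero, so the
mass stays `1`. Eliminating `z_A = 1 - z_{D₁} - z_{D₂}`, the deviations `v, w` of `z_{D₁}, z_{D₂}`
from the equilibrium solve the planar system `v' = -(c₁^A + c₁^D) v - c₁^A w`,
`w' = -c₂^A v - (c₂^A + c₂^D) w`. Along it `E = c₂^A v² + c₁^A w²` satisfies
`E' = -2 (c₂^A c₁^D v² + c₁^A c₂^D w² + c₁^A c₂^A (v + w)²) ≤ -2 min(c₁^D, c₂^D) E`,
so `E`, and with it `v` and `w`, decays exponentially.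
-/

open Filter Real Set Topology

lemma eq_apply_zero_of_hasDerivAt_zero {E : Type*} [NormedAddCommGroup E] [NormedSpace ℝ E]
    {f : ℝ → E} (hf : ∀ t, 0 ≤ t → HasDerivAt f 0 t) {t : ℝ} (ht : 0 ≤ t) : f t = f 0 :=
  constant_of_has_deriv_right_zero
    (fun x hx => (hf x hx.1).continuousAt.continuousWithinAt)
    (fun x hx => (hf x hx.1).hasDerivWithinAt) t ⟨ht, le_rfl⟩

lemma le_mul_exp_neg_of_hasDerivAt_le_neg_mul {f f' : ℝ → ℝ} {k : ℝ}
    (hf : ∀ t, 0 ≤ t → HasDerivAt f (f' t) t) (hf' : ∀ t, 0 ≤ t → f' t ≤ -k * f t)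
    {t : ℝ} (ht : 0 ≤ t) : f t ≤ f 0 * exp (-k * t) := by
  have hg : ∀ s, 0 ≤ s →
      HasDerivAt (fun s => f s * exp (k * s)) ((f' s + k * f s) * exp (k * s)) s := by
    intro s hs
    refine ((hf s hs).mul ((hasDerivAt_id s).const_mul k).exp).congr_deriv ?_
    simp only [id, mul_one]
    ring
  have hanti : AntitoneOn (fun s => f s * exp (k * s)) (Ici 0) := by
    refine antitoneOn_of_hasDerivWithinAt_nonpos (f' := fun s => (f' s + k * f s) * exp (k * s))
      (convex_Ici 0)
      (fun s hs => (hg s hs).continuousAt.continuousWithinAt) ?_ ?_ <;>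
      rw [interior_Ici] <;> intro s hs
    · exact (hg s hs.le).hasDerivWithinAt
    · exact mul_nonpos_of_nonpos_of_nonneg (by linarith [hf' s hs.le]) (exp_pos _).le
  have h := hanti self_mem_Ici ht ht
  simp only [mul_zero, exp_zero, mul_one] at h
  rw [neg_mul, exp_neg, ← div_eq_mul_inv, le_div_iff₀ (exp_pos _)]
  exact h

lemma tendsto_zero_of_hasDerivAt_le_neg_mul {f f' : ℝ → ℝ} {k : ℝ} (hk : 0 < k)
    (hf : ∀ t, 0 ≤ t → HasDerivAt f (f' t) t) (hf' : ∀ t, 0 ≤ t → f' t ≤ -k * f t)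
    (hf₀ : ∀ t, 0 ≤ t → 0 ≤ f t) : Tendsto f atTop (𝓝 0) := by
  have hexp : Tendsto (fun t => f 0 * exp (-k * t)) atTop (𝓝 0) := by
    simpa using (tendsto_exp_neg_atTop_nhds_zero.comp
      (tendsto_id.const_mul_atTop hk)).const_mul (f 0)
  refine squeeze_zero' (eventually_ge_atTop 0 |>.mono hf₀) ?_ hexp
  exact eventually_ge_atTop 0 |>.mono fun t ht =>
    le_mul_exp_neg_of_hasDerivAt_le_neg_mul hf hf' ht

lemma tendsto_zero_of_sq_le {α : Type*} {l : Filter α} {u e : α → ℝ}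
    (hle : ∀ᶠ x in l, u x ^ 2 ≤ e x) (he : Tendsto e l (𝓝 0)) : Tendsto u l (𝓝 0) := by
  have hsqrt : Tendsto (fun x => √(e x)) l (𝓝 0) := by
    simpa using he.sqrt
  refine squeeze_zero_norm' (hle.mono fun x hx => ?_) hsqrt
  rw [Real.norm_eq_abs, ← sqrt_sq_eq_abs]
  exact sqrt_le_sqrt hx

theorem tendsto_zero_of_seedBank_deviation {a₁ a₂ d₁ d₂ : ℝ}
    (ha₁ : 0 < a₁) (ha₂ : 0 < a₂) (hd₁ : 0 < d₁) (hd₂ : 0 < d₂) {v w : ℝ → ℝ}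
    (hv : ∀ t, 0 ≤ t → HasDerivAt v (-(a₁ + d₁) * v t - a₁ * w t) t)
    (hw : ∀ t, 0 ≤ t → HasDerivAt w (-a₂ * v t - (a₂ + d₂) * w t) t) :
    Tendsto v atTop (𝓝 0) ∧ Tendsto w atTop (𝓝 0) := by
  set k := min d₁ d₂
  set E : ℝ → ℝ := fun t => a₂ * v t ^ 2 + a₁ * w t ^ 2
  have hE : ∀ t, 0 ≤ t → HasDerivAt E
      (-2 * (a₂ * d₁ * v t ^ 2 + a₁ * d₂ * w t ^ 2 + a₁ * a₂ * (v t + w t) ^ 2)) t := by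
    intro t ht
    refine ((((hv t ht).pow 2).const_mul a₂).add
      (((hw t ht).pow 2).const_mul a₁)).congr_deriv ?_
    push_cast
    ring
  have hE' : ∀ t, 0 ≤ t → -2 * (a₂ * d₁ * v t ^ 2 + a₁ * d₂ * w t ^ 2
      + a₁ * a₂ * (v t + w t) ^ 2) ≤ -(2 * k) * E t := by
    intro t _
    have h₁ : a₂ * k * v t ^ 2 ≤ a₂ * d₁ * v t ^ 2 := by gcongr; exact min_le_left _ _
    have h₂ : a₁ * k * w t ^ 2 ≤ a₁ * d₂ * w t ^ 2 := by gcongr; exact min_le_right _ _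
    have h₃ : 0 ≤ a₁ * a₂ * (v t + w t) ^ 2 := by positivity
    nlinarith
  have hE0 : Tendsto E atTop (𝓝 0) :=
    tendsto_zero_of_hasDerivAt_le_neg_mul (by positivity) hE hE' fun t _ => by positivity
  constructor
  · refine tendsto_zero_of_sq_le (Eventually.of_forall fun t => ?_)
      (by simpa using hE0.div_const a₂)
    rw [le_div_iff₀' ha₂]
    nlinarith [sq_nonneg (w t)]
  · refine tendsto_zero_of_sq_le (Eventually.of_forall fun t => ?_)
      (by simpa using hE0.div_const a₁)
    rw [le_div_iff₀' ha₁]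
    nlinarith [sq_nonneg (v t)]

/-- Appendix B.2 (eqs. (B.13)–(B.14)): the autonomous linear system for the fractions of
active and colour-1/colour-2 dormant individuals conserves total mass `1` and converges to
the equilibrium `(1, c₁^A/c₁^D, c₂^A/c₂^D)/(1 + c₁^A/c₁^D + c₂^A/c₂^D)`. -/
theorem moran_two_colour_fraction_equilibrium
    (c1A c2A c1D c2D : ℝ) (h1A : 0 < c1A) (h2A : 0 < c2A) (h1D : 0 < c1D) (h2D : 0 < c2D)
    (zA zD1 zD2 : ℝ → ℝ)
    (hA : ∀ t : ℝ, 0 ≤ t →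
      HasDerivAt zA (c1D * zD1 t - c1A * zA t + c2D * zD2 t - c2A * zA t) t)
    (hD1 : ∀ t : ℝ, 0 ≤ t → HasDerivAt zD1 (c1A * zA t - c1D * zD1 t) t)
    (hD2 : ∀ t : ℝ, 0 ≤ t → HasDerivAt zD2 (c2A * zA t - c2D * zD2 t) t)
    (hinit : zA 0 + zD1 0 + zD2 0 = 1) :
    (∀ t : ℝ, 0 ≤ t → zA t + zD1 t + zD2 t = 1)
    ∧ Tendsto zA atTop (nhds (1 / (1 + c1A / c1D + c2A / c2D)))
    ∧ Tendsto zD1 atTop (nhds ((c1A / c1D) / (1 + c1A / c1D + c2A / c2D)))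
    ∧ Tendsto zD2 atTop (nhds ((c2A / c2D) / (1 + c1A / c1D + c2A / c2D))) := by
  set T := 1 + c1A / c1D + c2A / c2D
  have hmass : ∀ t, 0 ≤ t → zA t + zD1 t + zD2 t = 1 := fun t ht => by
    rw [← hinit]
    refine eq_apply_zero_of_hasDerivAt_zero (f := fun s => zA s + zD1 s + zD2 s)
      (fun s hs => (((hA s hs).add (hD1 s hs)).add (hD2 s hs)).congr_deriv ?_) ht
    ring
  have hv : ∀ t, 0 ≤ t → HasDerivAt (fun s => zD1 s - c1A / c1D / T)
      (-(c1A + c1D) * (zD1 t - c1A / c1D / T) - c1A * (zD2 t - c2A / c2D / T)) t :=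
    fun t ht => ((hD1 t ht).sub_const _).congr_deriv <| by
      rw [show zA t = 1 - zD1 t - zD2 t by linarith [hmass t ht]]
      simp only [T]
      field_simp
      ring
  have hw : ∀ t, 0 ≤ t → HasDerivAt (fun s => zD2 s - c2A / c2D / T)
      (-c2A * (zD1 t - c1A / c1D / T) - (c2A + c2D) * (zD2 t - c2A / c2D / T)) t :=
    fun t ht => ((hD2 t ht).sub_const _).congr_deriv <| by
      rw [show zA t = 1 - zD1 t - zD2 t by linarith [hmass t ht]]
      simp only [T]
      field_simp
      ring
  obtain ⟨hv0, hw0⟩ := tendsto_zero_of_seedBank_deviation h1A h2A h1D h2D hv hw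
  have hD1lim : Tendsto zD1 atTop (nhds (c1A / c1D / T)) := by
    simpa using hv0.add_const (c1A / c1D / T)
  have hD2lim : Tendsto zD2 atTop (nhds (c2A / c2D / T)) := by
    simpa using hw0.add_const (c2A / c2D / T)
  refine ⟨hmass, ?_, hD1lim, hD2lim⟩
  have hAlim := (tendsto_const_nhds (x := (1 : ℝ)).sub hD1lim).sub hD2lim
  rw [show 1 - c1A / c1D / T - c2A / c2D / T = 1 / T by simp only [T]; field_simp; ring] at hAlim
  refine hAlim.congr' ((eventually_ge_atTop 0).mono fun t ht => ?_)
  linarith [hmass t ht]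
end

section
/- Let c^A, c^D ∈ (0,∞) and let f : ℝ³ → ℝ be twice continuously differentiable. For N ∈ ℕ and integers i, j, k with 1 ≤ k ≤ N, 0 ≤ i ≤ k and 0 ≤ j ≤ N − k, define (G^N f)(i,j,k) = N (k−i)(i/k)[ f((i+1)/N, j/N, k/N) − f(i/N, j/N, k/N) ] + N i((k−i)/k)[ f((i−1)/N, j/N, k/N) − f(i/N, j/N, k/N) ] + c^A i [ f((i−1)/N, (j+1)/N, (k−1)/N) − f(i/N, j/N, k/N) ] + c^D j [ f((i+1)/N, (j−1)/N, (k+1)/N) − f(i/N, j/N, k/N) ] + c^A (k−i)[ f(i/N, j/N, (k−1)/N) − f(i/N, j/N, k/N) ] + c^D (N−k−j)[ f(i/N, j/N, (k+1)/N) − f(i/N, j/N, k/N) ]. Suppose (i_N), (j_N), (k_N) are integer sequences satisfying these constraints with i_N/N → x, j_N/N → y, k_N/N → z as N → ∞, where z > 0. Then lim_{N→∞} (G^N f)(i_N, j_N, k_N) = (x(z−x)/z) ∂²f/∂x²(x,y,z) + (c^D y − c^A x) ∂f/∂x(x,y,z) + (c^A x − c^D y) ∂f/∂y(x,y,z) +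 (c^D(1−z) − c^A z) ∂f/∂z(x,y,z). -/
/-!
Write `p_N = (i/N, j/N, k/N)`. The two resampling terms of `G^N f` combine into
`(i/N)((k-i)/N)/(k/N)` times `N²` times the symmetric second difference of `f` at `p_N` in the
first coordinate, and each of the four migration terms is a rate times a difference quotient
`N (f (p_N + v/N) - f p_N)` along a fixed jump vector `v`. As `f` is `C²`, `Df` and `D²f` are
strict derivatives at `p = (x, y, z)`, so these quotients still converge although their base
points move: first differences to `Df p v` and, after the mean value theorem turns them into
first differences of `Df`, second differences to `D²f p v v`. Collecting the jump vectors gives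
the drift and diffusion coefficients of the limit.
-/

open Filter Topology Asymptotics

section
variable {ι E F : Type*} [NormedAddCommGroup E] [NormedSpace ℝ E]
  [NormedAddCommGroup F] [NormedSpace ℝ F] {l : Filter ι} {a : ι → E} {t : ι → ℝ}

theorem HasStrictFDerivAt.tendsto_slope_of_tendsto {f : E → F} {f' : E →L[ℝ] F} {p : E}
    (hf : HasStrictFDerivAt f f' p) (ha : Tendsto a l (𝓝 p)) (ht : Tendsto t l (𝓝 0))
    (ht0 : ∀ᶠ n in l, t n ≠ 0) (v : E) :
    Tendsto (fun n => (t n)⁻¹ • (f (a n + t n • v) - f (a n))) l (𝓝 (f' v)) := by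
  have hb : Tendsto (fun n => (a n + t n • v, a n)) l (𝓝 (p, p)) := by
    simpa using (ha.add (ht.smul_const v)).prodMk_nhds ha
  have hR := hf.isLittleO.comp_tendsto hb
  simp only [Function.comp_def, add_sub_cancel_left] at hR
  have hR' := hR.trans_isBigO (IsBigO.of_bound ‖v‖ (Eventually.of_forall fun n => by
    rw [norm_smul, mul_comm]) : (fun n => t n • v) =O[l] t)
  have hsmall :
      Tendsto (fun n => (t n)⁻¹ • (f (a n + t n • v) - f (a n) - f' (t n • v))) l (𝓝 0) :=
    (isLittleO_one_iff ℝ).1 <|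
      ((isBigO_refl (fun n => (t n)⁻¹) l).smul_isLittleO hR').trans_isBigO
        (isBigO_of_le _ fun n => by
          simp only [smul_eq_mul, norm_one, norm_mul, norm_inv]
          exact inv_mul_le_one)
  have hlim := (tendsto_const_nhds (x := f' v)).add hsmall
  rw [add_zero] at hlim
  refine hlim.congr' ?_
  filter_upwards [ht0] with n hn
  simp [smul_sub, smul_smul, inv_mul_cancel₀ hn]

theorem exists_second_difference_eq {f : E → ℝ} (hf : Differentiable ℝ f) (c h : E) :
    ∃ s ∈ Set.Ioo (0 : ℝ) 1, f (c + h) + f (c - h) - 2 * f c =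
      (fderiv ℝ f (c + (s - 1) • h + h) - fderiv ℝ f (c + (s - 1) • h)) h := by
  have hline : ∀ s : ℝ, HasDerivAt (fun s : ℝ => c + (s - 1) • h) h s := fun s => by
    simpa using (((hasDerivAt_id s).sub_const 1).smul_const h).const_add c
  have hφ : ∀ s : ℝ,
      HasDerivAt (fun s : ℝ => f (c + (s - 1) • h + h) - f (c + (s - 1) • h))
      ((fderiv ℝ f (c + (s - 1) • h + h) - fderiv ℝ f (c + (s - 1) • h)) h) s := fun s =>
    ((hf _).hasFDerivAt.comp_hasDerivAt s ((hline s).add_const h)).sub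
      ((hf _).hasFDerivAt.comp_hasDerivAt s (hline s))
  obtain ⟨s, hs, hslope⟩ := exists_hasDerivAt_eq_slope _ _ zero_lt_one
    (fun s _ => (hφ s).continuousAt.continuousWithinAt) (fun s _ => hφ s)
  refine ⟨s, hs, ?_⟩
  rw [hslope]
  simp only [sub_self, zero_smul, add_zero, sub_zero, div_one, zero_sub, neg_one_smul,
    sub_add_cancel, ← sub_eq_add_neg]
  ring

theorem HasStrictFDerivAt.tendsto_second_difference {f : E → ℝ} {B : E →L[ℝ] E →L[ℝ] ℝ}
    {p : E} (hB : HasStrictFDerivAt (fderiv ℝ f) B p) (hf : Differentiable ℝ f)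
    (ha : Tendsto a l (𝓝 p)) (ht : Tendsto t l (𝓝 0)) (ht0 : ∀ᶠ n in l, t n ≠ 0) (v : E) :
    Tendsto (fun n => (t n ^ 2)⁻¹ * (f (a n + t n • v) + f (a n - t n • v) - 2 * f (a n)))
      l (𝓝 (B v v)) := by
  choose s hs hdiff using fun n => exists_second_difference_eq hf (a n) (t n • v)
  have hc : Tendsto (fun n => a n + (s n - 1) • t n • v) l (𝓝 p) := by
    have htv : Tendsto (fun n => t n • v) l (𝓝 0) := by simpa using ht.smul_const v
    have hshift : Tendsto (fun n => (s n - 1) • t n • v) l (𝓝 0) :=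
      squeeze_zero_norm (fun n => by
        rw [norm_smul]
        exact mul_le_of_le_one_left (norm_nonneg _)
          (abs_le.2 ⟨by linarith [(hs n).1], by linarith [(hs n).2]⟩))
        (tendsto_norm_zero.comp htv)
    simpa using ha.add hshift
  refine (((ContinuousLinearMap.apply ℝ ℝ v).continuous.tendsto (B v)).comp
    (hB.tendsto_slope_of_tendsto hc ht ht0 v)).congr' ?_
  filter_upwards [ht0] with n hn
  rw [hdiff n]
  simp only [Function.comp_apply, ContinuousLinearMap.apply_apply, map_smul,
    sub_apply, smul_eq_mul]
  field_simp

theorem deriv_comp_of_hasDerivAt {f : E → F} (hf : Differentiable ℝ f) {γ : ℝ → E} {e : E}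
    {x : ℝ} (hγ : HasDerivAt γ e x) : deriv (fun u => f (γ u)) x = fderiv ℝ f (γ x) e :=
  ((hf _).hasFDerivAt.comp_hasDerivAt x hγ).deriv

theorem deriv_deriv_comp_of_hasDerivAt {f : E → F} (hf : ContDiff ℝ 2 f) {γ : ℝ → E}
    {e : E} (hγ : ∀ u, HasDerivAt γ e u) (x : ℝ) :
    deriv (deriv fun u => f (γ u)) x = fderiv ℝ (fderiv ℝ f) (γ x) e e := by
  have hf' : Differentiable ℝ (fderiv ℝ f) :=
    (hf.fderiv_right (m := 1) (by norm_num)).differentiable (by norm_num)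
  simp only [funext fun u => deriv_comp_of_hasDerivAt (hf.differentiable (by norm_num)) (hγ u)]
  exact ((ContinuousLinearMap.apply ℝ F e).hasFDerivAt.comp_hasDerivAt x
    ((hf' _).hasFDerivAt.comp_hasDerivAt x (hγ x))).deriv

end

theorem ContinuousLinearMap.map_triple {F : Type*} [NormedAddCommGroup F] [NormedSpace ℝ F]
    (L : ℝ × ℝ × ℝ →L[ℝ] F) (a b c : ℝ) :
    L (a, b, c) = a • L (1, 0, 0) + b • L (0, 1, 0) + c • L (0, 0, 1) := by
  rw [← map_smul, ← map_smul, ← map_smul, ← map_add, ← map_add]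
  simp

theorem hasDerivAt_line_fst (y z u : ℝ) :
    HasDerivAt (fun u : ℝ => ((u, y, z) : ℝ × ℝ × ℝ)) (1, 0, 0) u :=
  (hasDerivAt_id u).prodMk ((hasDerivAt_const u y).prodMk (hasDerivAt_const u z))

theorem hasDerivAt_line_snd (x z v : ℝ) :
    HasDerivAt (fun v : ℝ => ((x, v, z) : ℝ × ℝ × ℝ)) (0, 1, 0) v :=
  (hasDerivAt_const v x).prodMk ((hasDerivAt_id v).prodMk (hasDerivAt_const v z))

theorem hasDerivAt_line_thd (x y w : ℝ) :
    HasDerivAt (fun w : ℝ => ((x, y, w) : ℝ × ℝ × ℝ)) (0, 0, 1) w :=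
  (hasDerivAt_const w x).prodMk ((hasDerivAt_const w y).prodMk (hasDerivAt_id w))

theorem prodMk_div_add_inv_smul (N a b c d e g : ℝ) :
    ((a / N, b / N, c / N) : ℝ × ℝ × ℝ) + N⁻¹ • (d, e, g) =
      ((a + d) / N, (b + e) / N, (c + g) / N) := by
  simp only [Prod.smul_mk, Prod.mk_add_mk, smul_eq_mul, add_div]
  ring_nf

theorem moran_generator_convergence_general
    (cA cD : ℝ)
    (f : ℝ × ℝ × ℝ → ℝ) (hf : ContDiff ℝ 2 f)
    (GN : ℕ → ℕ → ℕ → ℕ → ℝ)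
    (hGN : ∀ N i j k : ℕ, GN N i j k =
        (N : ℝ) * ((k : ℝ) - (i : ℝ)) * ((i : ℝ) / (k : ℝ)) *
          (f (((i : ℝ) + 1) / N, (j : ℝ) / N, (k : ℝ) / N)
            - f ((i : ℝ) / N, (j : ℝ) / N, (k : ℝ) / N))
      + (N : ℝ) * (i : ℝ) * (((k : ℝ) - (i : ℝ)) / (k : ℝ)) *
          (f (((i : ℝ) - 1) / N, (j : ℝ) / N, (k : ℝ) / N)
            - f ((i : ℝ) / N, (j : ℝ) / N, (k : ℝ) / N))
      + cA * (i : ℝ) *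
          (f (((i : ℝ) - 1) / N, ((j : ℝ) + 1) / N, ((k : ℝ) - 1) / N)
            - f ((i : ℝ) / N, (j : ℝ) / N, (k : ℝ) / N))
      + cD * (j : ℝ) *
          (f (((i : ℝ) + 1) / N, ((j : ℝ) - 1) / N, ((k : ℝ) + 1) / N)
            - f ((i : ℝ) / N, (j : ℝ) / N, (k : ℝ) / N))
      + cA * ((k : ℝ) - (i : ℝ)) *
          (f ((i : ℝ) / N, (j : ℝ) / N, ((k : ℝ) - 1) / N)
            - f ((i : ℝ) / N, (j : ℝ) / N, (k : ℝ) / N))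
      + cD * ((N : ℝ) - (k : ℝ) - (j : ℝ)) *
          (f ((i : ℝ) / N, (j : ℝ) / N, ((k : ℝ) + 1) / N)
            - f ((i : ℝ) / N, (j : ℝ) / N, (k : ℝ) / N)))
    (iN jN kN : ℕ → ℕ)
    (x y z : ℝ) (hz : 0 < z)
    (hx : Tendsto (fun N : ℕ => (iN N : ℝ) / N) atTop (nhds x))
    (hy : Tendsto (fun N : ℕ => (jN N : ℝ) / N) atTop (nhds y))
    (hzc : Tendsto (fun N : ℕ => (kN N : ℝ) / N) atTop (nhds z)) :
    Tendsto (fun N : ℕ => GN N (iN N) (jN N) (kN N)) atTop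
      (nhds
        ((x * (z - x) / z) * deriv (deriv fun u : ℝ => f (u, y, z)) x
          + (cD * y - cA * x) * deriv (fun u : ℝ => f (u, y, z)) x
          + (cA * x - cD * y) * deriv (fun v : ℝ => f (x, v, z)) y
          + (cD * (1 - z) - cA * z) * deriv (fun w : ℝ => f (x, y, w)) z)) := by
  have hf1 : Differentiable ℝ f := hf.differentiable (by norm_num)
  set p : ℝ × ℝ × ℝ := (x, y, z)
  have hA : HasStrictFDerivAt f (fderiv ℝ f p) p := hf.hasStrictFDerivAt (by norm_num)
  have hB : HasStrictFDerivAt (fderiv ℝ f) (fderiv ℝ (fderiv ℝ f) p) p :=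
    (hf.fderiv_right (m := 1) (by norm_num)).hasStrictFDerivAt (by norm_num)
  set P : ℕ → ℝ × ℝ × ℝ := fun N => (iN N / N, jN N / N, kN N / N)
  have hP : Tendsto P atTop (𝓝 p) := hx.prodMk_nhds (hy.prodMk_nhds hzc)
  have ht : Tendsto (fun N : ℕ => (N : ℝ)⁻¹) atTop (𝓝 0) :=
    tendsto_inv_atTop_zero.comp tendsto_natCast_atTop_atTop
  have ht0 : ∀ᶠ N : ℕ in atTop, (N : ℝ)⁻¹ ≠ 0 :=
    (eventually_ne_atTop 0).mono fun N hN => by simpa using hN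
  have slope := fun v => hA.tendsto_slope_of_tendsto hP ht ht0 v
  -- jumps of `(X, Y, Z)` when an active ♥, a dormant ♥, an active other-type, a dormant
  -- other-type individual switches between the active and the dormant state
  have hlim := ((((((hx.mul (hzc.sub hx)).div hzc hz.ne').mul
      (hB.tendsto_second_difference hf1 hP ht ht0 (1, 0, 0))).add
    ((hx.const_mul cA).mul (slope (-1, 1, -1)))).add
    ((hy.const_mul cD).mul (slope (1, -1, 1)))).add
    (((hzc.sub hx).const_mul cA).mul (slope (0, 0, -1)))).add
    (((((tendsto_const_nhds (x := (1 : ℝ))).sub hzc).sub hy).const_mul cD).mul (slope (0, 0, 1)))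
  convert hlim.congr' ?_ using 2
  · rw [deriv_deriv_comp_of_hasDerivAt hf (hasDerivAt_line_fst y z),
      deriv_comp_of_hasDerivAt hf1 (hasDerivAt_line_fst y z x),
      deriv_comp_of_hasDerivAt hf1 (hasDerivAt_line_snd x z y),
      deriv_comp_of_hasDerivAt hf1 (hasDerivAt_line_thd x y z)]
    rw [(fderiv ℝ f p).map_triple (-1) 1 (-1), (fderiv ℝ f p).map_triple 1 (-1) 1,
      (fderiv ℝ f p).map_triple 0 0 (-1)]
    simp only [smul_eq_mul]
    ring
  · filter_upwards [eventually_ne_atTop 0] with N hN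
    simp only [P, hGN, sub_eq_add_neg _ ((N : ℝ)⁻¹ • _), ← smul_neg, Prod.neg_mk, neg_zero,
      prodMk_div_add_inv_smul, Pi.div_apply, smul_eq_mul]
    norm_num
    simp only [← sub_eq_add_neg]
    field_simp
    ring

/-- Appendix B.1 (eqs. (B.5)–(B.7)): convergence of the generators of the sped-up Moran
model with one-colour seed-bank to the generator of the limiting diffusion. For twice
continuously differentiable `f` and integer sequences `(i_N, j_N, k_N)` with
`1 ≤ k_N ≤ N`, `i_N ≤ k_N`, `j_N ≤ N - k_N` and `i_N/N → x`, `j_N/N → y`, `k_N/N → z > 0`,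
`(G^N f)(i_N, j_N, k_N)` converges to
`(x(z-x)/z) ∂²f/∂x² + (c^D y - c^A x) ∂f/∂x + (c^A x - c^D y) ∂f/∂y
  + (c^D(1-z) - c^A z) ∂f/∂z` evaluated at `(x,y,z)`. -/
theorem moran_generator_convergence
    (cA cD : ℝ) (hcA : 0 < cA) (hcD : 0 < cD)
    (f : ℝ × ℝ × ℝ → ℝ) (hf : ContDiff ℝ 2 f)
    (GN : ℕ → ℕ → ℕ → ℕ → ℝ)
    (hGN : ∀ N i j k : ℕ, GN N i j k =
        (N : ℝ) * ((k : ℝ) - (i : ℝ)) * ((i : ℝ) / (k : ℝ)) *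
          (f (((i : ℝ) + 1) / N, (j : ℝ) / N, (k : ℝ) / N)
            - f ((i : ℝ) / N, (j : ℝ) / N, (k : ℝ) / N))
      + (N : ℝ) * (i : ℝ) * (((k : ℝ) - (i : ℝ)) / (k : ℝ)) *
          (f (((i : ℝ) - 1) / N, (j : ℝ) / N, (k : ℝ) / N)
            - f ((i : ℝ) / N, (j : ℝ) / N, (k : ℝ) / N))
      + cA * (i : ℝ) *
          (f (((i : ℝ) - 1) / N, ((j : ℝ) + 1) / N, ((k : ℝ) - 1) / N)
            - f ((i : ℝ) / N, (j : ℝ) / N, (k : ℝ) / N))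
      + cD * (j : ℝ) *
          (f (((i : ℝ) + 1) / N, ((j : ℝ) - 1) / N, ((k : ℝ) + 1) / N)
            - f ((i : ℝ) / N, (j : ℝ) / N, (k : ℝ) / N))
      + cA * ((k : ℝ) - (i : ℝ)) *
          (f ((i : ℝ) / N, (j : ℝ) / N, ((k : ℝ) - 1) / N)
            - f ((i : ℝ) / N, (j : ℝ) / N, (k : ℝ) / N))
      + cD * ((N : ℝ) - (k : ℝ) - (j : ℝ)) *
          (f ((i : ℝ) / N, (j : ℝ) / N, ((k : ℝ) + 1) / N)
            - f ((i : ℝ) / N, (j : ℝ) / N, (k : ℝ) / N)))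
    (iN jN kN : ℕ → ℕ)
    (hcon : ∀ N : ℕ, 1 ≤ N →
      1 ≤ kN N ∧ kN N ≤ N ∧ iN N ≤ kN N ∧ jN N ≤ N - kN N)
    (x y z : ℝ) (hz : 0 < z)
    (hx : Tendsto (fun N : ℕ => (iN N : ℝ) / N) atTop (nhds x))
    (hy : Tendsto (fun N : ℕ => (jN N : ℝ) / N) atTop (nhds y))
    (hzc : Tendsto (fun N : ℕ => (kN N : ℝ) / N) atTop (nhds z)) :
    Tendsto (fun N : ℕ => GN N (iN N) (jN N) (kN N)) atTop
      (nhds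
        ((x * (z - x) / z) * deriv (deriv fun u : ℝ => f (u, y, z)) x
          + (cD * y - cA * x) * deriv (fun u : ℝ => f (u, y, z)) x
          + (cA * x - cD * y) * deriv (fun v : ℝ => f (x, v, z)) y
          + (cD * (1 - z) - cA * z) * deriv (fun w : ℝ => f (x, y, w)) z)) :=
  moran_generator_convergence_general cA cD f hf GN hGN iN jN kN x y z hz hx hy hzc
end
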